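/- Let 𝓑 be a v-reduced sequence of κ pairwise disjoint bases of a linear frame matroid M (each base meeting E(v) in at most two edges), with matching graph 𝔐_𝓑 on vertices x_1,…,x_m. Suppose x_i x_j ∈ E(𝔐_𝓑) and x_k is an isolated vertex of 𝔐_𝓑 (i.e. e_k lies in a base containing exactly one edge at v). Then there is a v-reduced sequence 𝓑′ with 𝓑 ∼ 𝓑′ (reachable by symmetric exchanges) such that E(𝔐_{𝓑′}) = (E(𝔐_𝓑) \ {x_i x_j}) ∪ {x_j x_k} or E(𝔐_{𝓑′}) = (E(𝔐_𝓑) \ {x_i x_j}) ∪ {x_i x_k}. -/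

import Mathlib

open Finset
open scoped symmDiff Classical

/-- A multigraph: each edge carries an unordered pair of endpoints. -/
structure Multigraph (V : Type*) (E : Type*) where
  ends : E → Sym2 V

namespace Multigraph

variable {V E : Type*} (G : Multigraph V E)

/-- Edge `e` is incident with vertex `w`. -/
def Inc (e : E) (w : V) : Prop := w ∈ G.ends e

/-- `e` is a loop. -/
def IsLoopEdge (e : E) : Prop := (G.ends e).IsDiag

/-- Multiplicity of a vertex in an edge: `2` for a loop at the vertex, `1` if incident,
`0` otherwise. -/
noncomputable def mult (e : E) (w : V) : ℕ :=
  if G.ends e = Sym2.diag w then 2 else if w ∈ G.ends e then 1 else 0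

/-- Degree of `w` with respect to the edge set `A` (loops counted twice). -/
noncomputable def deg (A : Finset E) (w : V) : ℕ := ∑ e ∈ A, G.mult e w

/-- Two edges of `A` sharing a vertex. -/
def AdjIn (A : Finset E) (e f : E) : Prop :=
  e ∈ A ∧ f ∈ A ∧ ∃ w, G.Inc e w ∧ G.Inc f w

/-- The edge set `A` induces a connected subgraph. -/
def EdgeConnected (A : Finset E) : Prop :=
  ∀ e ∈ A, ∀ f ∈ A, Relation.ReflTransGen (G.AdjIn A) e f

/-- `A` is the edge set of a cycle: nonempty, connected, and every vertex has degree
`0` or `2` in `A`. -/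
def IsCycle (A : Finset E) : Prop :=
  A.Nonempty ∧ G.EdgeConnected A ∧ ∀ w, G.deg A w = 0 ∨ G.deg A w = 2

/-- The set of vertices met by the edge set `A`. -/
def Supp (A : Finset E) : Set V := { w | ∃ e ∈ A, G.Inc e w }

/-- `A` is the edge set of a path from `u` to `w`. -/
def IsPath (A : Finset E) (u w : V) : Prop :=
  u ≠ w ∧ G.EdgeConnected A ∧ G.deg A u = 1 ∧ G.deg A w = 1 ∧
    ∀ x, x ≠ u → x ≠ w → (G.deg A x = 0 ∨ G.deg A x = 2)

/-- Vertices joined by a walk using edges of `A`. -/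
def Reach (A : Finset E) (a b : V) : Prop :=
  Relation.ReflTransGen (fun x y => ∃ e ∈ A, G.Inc e x ∧ G.Inc e y) a b

/-- `T` is a spanning tree: every pair of vertices is joined by `T` and `T` contains
no cycle. -/
def IsSpanningTree (T : Finset E) : Prop :=
  (∀ a b : V, G.Reach T a b) ∧ ∀ C ⊆ T, ¬ G.IsCycle C

/-- `C` is the fundamental cycle of the edge `e` with respect to the spanning tree `T`. -/
def IsFundCycle (T : Finset E) (e : E) (C : Finset E) : Prop :=
  G.IsCycle C ∧ e ∈ C ∧ C ⊆ insert e T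

end Multigraph

/-- Symmetric difference of a list of finsets. -/
def listSymmDiff {E : Type*} [DecidableEq E] (L : List (Finset E)) : Finset E :=
  L.foldr (· ∆ ·) ∅

/-- A linear biased graph: a multigraph together with a class `Bal` of *balanced* cycles
satisfying the theta property and closed under taking cycles that are symmetric
differences of balanced cycles. -/
structure LinearBiasedGraph (V E : Type*) [DecidableEq E] where
  G : Multigraph V E
  Bal : Set (Finset E)
  bal_cycle : ∀ C ∈ Bal, G.IsCycle C
  theta : ∀ C₁ C₂ C₃ : Finset E, G.IsCycle C₁ → G.IsCycle C₂ → G.IsCycle C₃ →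
    C₃ = C₁ ∆ C₂ → C₁ ∈ Bal → C₂ ∈ Bal → C₃ ∈ Bal
  linear : ∀ L : List (Finset E), (∀ D ∈ L, D ∈ Bal) →
    ∀ C : Finset E, G.IsCycle C → C = listSymmDiff L → C ∈ Bal

namespace LinearBiasedGraph

variable {V E : Type*} [DecidableEq E] (Ω : LinearBiasedGraph V E)

/-- Independent sets of the frame matroid `M(Ω)`: edge sets containing no balanced cycle
and no two distinct cycles lying in a common component. -/
def FrameIndep (A : Finset E) : Prop :=
  (∀ C ⊆ A, Ω.G.IsCycle C → C ∉ Ω.Bal) ∧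
  ∀ C₁ C₂ : Finset E, C₁ ⊆ A → C₂ ⊆ A → Ω.G.IsCycle C₁ → Ω.G.IsCycle C₂ → C₁ ≠ C₂ →
    ∀ e₁ ∈ C₁, ∀ e₂ ∈ C₂, ¬ Relation.ReflTransGen (Ω.G.AdjIn A) e₁ e₂

/-- Bases of the frame matroid `M(Ω)`: maximal independent sets. -/
def FrameBase (B : Finset E) : Prop :=
  Ω.FrameIndep B ∧ ∀ A : Finset E, Ω.FrameIndep A → B ⊆ A → A = B

/-- Circuits of the frame matroid `M(Ω)`: minimal dependent sets. -/
def FrameCircuit (C : Finset E) : Prop :=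
  ¬ Ω.FrameIndep C ∧ ∀ C' ⊂ C, Ω.FrameIndep C'

variable {κ : ℕ}

/-- A single symmetric exchange between two members of a sequence of bases. -/
def SymExchStep (𝓑 𝓑' : Fin κ → Finset E) : Prop :=
  ∃ i j : Fin κ, i ≠ j ∧ ∃ e ∈ 𝓑 i, ∃ f ∈ 𝓑 j,
    Ω.FrameBase (insert f (𝓑 i \ {e})) ∧ Ω.FrameBase (insert e (𝓑 j \ {f})) ∧
    𝓑' i = insert f (𝓑 i \ {e}) ∧ 𝓑' j = insert e (𝓑 j \ {f}) ∧
    ∀ t : Fin κ, t ≠ i → t ≠ j → 𝓑' t = 𝓑 t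

/-- `𝓑'` is obtained from `𝓑` by a finite sequence of symmetric exchanges. -/
def ExchReachable (𝓑 𝓑' : Fin κ → Finset E) : Prop :=
  Relation.ReflTransGen Ω.SymExchStep 𝓑 𝓑'

end LinearBiasedGraph

/-- The edge set of the matching graph `𝔐_𝓑` of a `v`-reduced base sequence `𝓑`,
recorded as the set of pairs of `v`-incident edges lying in a common base. -/
def matchPairs {V E : Type*} [DecidableEq E] (Ω : LinearBiasedGraph V E) (v : V) {κ : ℕ}
    (𝓑 : Fin κ → Finset E) : Set (Finset E) :=
  { p | ∃ t : Fin κ, ((𝓑 t).filter fun e => Ω.G.Inc e v) = p ∧ p.card = 2 }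

/-! ### Auxiliary development: basic multigraph lemmas -/

set_option linter.unusedSectionVars false
set_option maxHeartbeats 800000

namespace Multigraph

variable {V E : Type*} [DecidableEq E] {G : Multigraph V E}

/-- The endpoints of an edge, as a finite set of vertices. -/
noncomputable def endsFinset (G : Multigraph V E) (e : E) : Finset V :=
  Sym2.lift ⟨fun a b => ({a, b} : Finset V), fun a b => by
    simp [Finset.pair_comm]⟩ (G.ends e)

lemma mem_endsFinset {e : E} {w : V} : w ∈ G.endsFinset e ↔ G.Inc e w := by
  obtain ⟨⟨a, b⟩, h⟩ := Quot.exists_rep (G.ends e)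
  have h' : G.ends e = s(a, b) := h.symm
  rw [Inc, endsFinset, h']
  simp [Sym2.mem_iff]

lemma endsFinset_card_le (e : E) : (G.endsFinset e).card ≤ 2 := by
  obtain ⟨⟨a, b⟩, h⟩ := Quot.exists_rep (G.ends e)
  have h' : G.ends e = s(a, b) := h.symm
  rw [endsFinset, h']
  simpa using Finset.card_insert_le a {b}

lemma endsFinset_nonempty (e : E) : (G.endsFinset e).Nonempty := by
  obtain ⟨⟨a, b⟩, h⟩ := Quot.exists_rep (G.ends e)
  have h' : G.ends e = s(a, b) := h.symm
  refine ⟨a, ?_⟩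
  rw [mem_endsFinset]
  rw [Inc, h']
  simp

lemma exists_inc (e : E) : ∃ w, G.Inc e w := by
  obtain ⟨w, hw⟩ := endsFinset_nonempty (G := G) e
  exact ⟨w, mem_endsFinset.1 hw⟩

lemma mult_pos_iff {e : E} {w : V} : 0 < G.mult e w ↔ G.Inc e w := by
  rw [mult, Inc]
  split_ifs with h1 h2
  · simp only [Nat.zero_lt_succ, true_iff]
    rw [h1]; exact Sym2.mem_mk_left w w
  · simp [h2]
  · simp [h2]

lemma mult_eq_zero_of_not_inc {e : E} {w : V} (h : ¬ G.Inc e w) : G.mult e w = 0 := by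
  by_contra h'
  exact h (mult_pos_iff.1 (Nat.pos_of_ne_zero h'))

lemma mult_le_two (e : E) (w : V) : G.mult e w ≤ 2 := by
  rw [mult]; split_ifs <;> omega

lemma mult_eq_one_of_not_diag {e : E} {w : V} (hinc : G.Inc e w)
    (hd : ¬ (G.ends e).IsDiag) : G.mult e w = 1 := by
  rw [mult]
  have : G.ends e ≠ Sym2.diag w := by
    intro h; rw [h] at hd; exact hd (Sym2.diag_isDiag w)
  rw [if_neg this, if_pos (show w ∈ G.ends e from hinc)]

lemma mult_diag_self {e : E} {w : V} (h : G.ends e = Sym2.diag w) : G.mult e w = 2 := by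
  rw [mult, if_pos h]

lemma inc_eq_of_diag {e : E} {w x : V} (h : G.ends e = Sym2.diag w) (hx : G.Inc e x) :
    x = w := by
  rw [Inc, h] at hx
  simpa [Sym2.diag] using hx

/-! #### Degrees -/

lemma deg_mono {A B : Finset E} (h : A ⊆ B) (w : V) : G.deg A w ≤ G.deg B w :=
  Finset.sum_le_sum_of_subset h

lemma deg_erase_add {A : Finset E} {e : E} (he : e ∈ A) (w : V) :
    G.deg (A.erase e) w + G.mult e w = G.deg A w :=
  Finset.sum_erase_add _ _ he

lemma deg_sdiff_add {A B : Finset E} (h : B ⊆ A) (w : V) :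
    G.deg (A \ B) w + G.deg B w = G.deg A w :=
  Finset.sum_sdiff h

lemma deg_union_of_disjoint {A B : Finset E} (h : Disjoint A B) (w : V) :
    G.deg (A ∪ B) w = G.deg A w + G.deg B w :=
  Finset.sum_union h

lemma deg_pos_iff {A : Finset E} {w : V} : 0 < G.deg A w ↔ ∃ e ∈ A, G.Inc e w := by
  constructor
  · intro h
    by_contra hc
    push_neg at hc
    have : G.deg A w = 0 := Finset.sum_eq_zero fun e he => mult_eq_zero_of_not_inc (hc e he)
    omega
  · rintro ⟨e, he, hinc⟩
    calc 0 < G.mult e w := mult_pos_iff.2 hinc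
    _ ≤ G.deg A w := Finset.single_le_sum (f := fun e => G.mult e w) (fun i _ => Nat.zero_le _) he

/-! #### The vertex set of an edge set -/

noncomputable def vFin (G : Multigraph V E) (A : Finset E) : Finset V :=
  A.biUnion fun e => G.endsFinset e

lemma mem_vFin {A : Finset E} {w : V} : w ∈ G.vFin A ↔ ∃ e ∈ A, G.Inc e w := by
  simp only [vFin, Finset.mem_biUnion]
  constructor
  · rintro ⟨e, he, hw⟩; exact ⟨e, he, mem_endsFinset.1 hw⟩
  · rintro ⟨e, he, hw⟩; exact ⟨e, he, mem_endsFinset.2 hw⟩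

lemma mem_vFin_iff_deg_pos {A : Finset E} {w : V} : w ∈ G.vFin A ↔ 0 < G.deg A w := by
  rw [mem_vFin, deg_pos_iff]

lemma vFin_mono {A B : Finset E} (h : A ⊆ B) : G.vFin A ⊆ G.vFin B := by
  intro w hw
  rw [mem_vFin] at hw ⊢
  obtain ⟨e, he, hi⟩ := hw
  exact ⟨e, h he, hi⟩

lemma vFin_union {A B : Finset E} : G.vFin (A ∪ B) = G.vFin A ∪ G.vFin B := by
  ext w
  simp only [mem_vFin, Finset.mem_union]
  constructor
  · rintro ⟨e, he, hi⟩
    rcases he with h | h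
    · exact Or.inl ⟨e, h, hi⟩
    · exact Or.inr ⟨e, h, hi⟩
  · rintro (⟨e, he, hi⟩ | ⟨e, he, hi⟩)
    · exact ⟨e, Or.inl he, hi⟩
    · exact ⟨e, Or.inr he, hi⟩

lemma endsFinset_subset_vFin {A : Finset E} {e : E} (he : e ∈ A) :
    G.endsFinset e ⊆ G.vFin A := by
  intro w hw
  rw [mem_endsFinset] at hw
  exact mem_vFin.2 ⟨e, he, hw⟩

lemma deg_eq_zero_of_not_mem_vFin {A : Finset E} {w : V} (h : w ∉ G.vFin A) :
    G.deg A w = 0 := by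
  by_contra h'
  exact h (mem_vFin_iff_deg_pos.2 (Nat.pos_of_ne_zero h'))

lemma sum_mult_endsFinset (e : E) : ∑ w ∈ G.endsFinset e, G.mult e w = 2 := by
  obtain ⟨⟨a, b⟩, h⟩ := Quot.exists_rep (G.ends e)
  have h' : G.ends e = s(a, b) := h.symm
  by_cases hab : a = b
  · subst hab
    have hd : G.ends e = Sym2.diag a := h'
    have hef : G.endsFinset e = {a} := by
      rw [endsFinset, h']; simp
    rw [hef, Finset.sum_singleton, mult_diag_self hd]
  · have hef : G.endsFinset e = {a, b} := by
      rw [endsFinset, h']; simp [Sym2.lift]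
    have hd : ¬ (G.ends e).IsDiag := by
      rw [h']
      simpa using hab
    have hma : G.mult e a = 1 := mult_eq_one_of_not_diag (by rw [Inc, h']; simp) hd
    have hmb : G.mult e b = 1 := mult_eq_one_of_not_diag (by rw [Inc, h']; simp) hd
    rw [hef, Finset.sum_pair hab, hma, hmb]

/-- Degree-sum formula. -/
lemma sum_deg (A : Finset E) : ∑ w ∈ G.vFin A, G.deg A w = 2 * A.card := by
  have : ∑ w ∈ G.vFin A, G.deg A w = ∑ e ∈ A, ∑ w ∈ G.vFin A, G.mult e w := by
    simp only [deg]
    exact Finset.sum_comm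
  rw [this]
  have h2 : ∀ e ∈ A, ∑ w ∈ G.vFin A, G.mult e w = 2 := by
    intro e he
    have : ∑ w ∈ G.endsFinset e, G.mult e w = ∑ w ∈ G.vFin A, G.mult e w := by
      apply Finset.sum_subset (endsFinset_subset_vFin he)
      intro w _ hw
      exact mult_eq_zero_of_not_inc (fun hi => hw (mem_endsFinset.2 hi))
    rw [← this, sum_mult_endsFinset]
  rw [Finset.sum_congr rfl h2, Finset.sum_const, smul_eq_mul, mul_comm]

end Multigraph
namespace Multigraph

variable {V E : Type*} [DecidableEq E] {G : Multigraph V E}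

/-! #### Connectivity -/

lemma adjIn_symm {A : Finset E} : Symmetric (G.AdjIn A) := by
  rintro e f ⟨he, hf, v', h1, h2⟩
  exact ⟨hf, he, v', h2, h1⟩

lemma rtg_symm {A : Finset E} {e f : E}
    (h : Relation.ReflTransGen (G.AdjIn A) e f) :
    Relation.ReflTransGen (G.AdjIn A) f e :=
  by
  induction h with
  | refl => rfl
  | tail _ hbc ih => exact Relation.ReflTransGen.head (adjIn_symm hbc) ih

lemma adjIn_mono {A B : Finset E} (h : A ⊆ B) {e f : E} (hef : G.AdjIn A e f) :
    G.AdjIn B e f :=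
  ⟨h hef.1, h hef.2.1, hef.2.2⟩

lemma rtg_mono {A B : Finset E} (h : A ⊆ B) {e f : E}
    (hef : Relation.ReflTransGen (G.AdjIn A) e f) :
    Relation.ReflTransGen (G.AdjIn B) e f :=
  Relation.ReflTransGen.mono (fun _ _ hh => adjIn_mono h hh) _ _ hef

/-- The connected component of the edge `g` inside the edge set `A`. -/
noncomputable def comp (G : Multigraph V E) (A : Finset E) (g : E) : Finset E :=
  A.filter fun h => Relation.ReflTransGen (G.AdjIn A) g h

lemma mem_comp {A : Finset E} {g h : E} :
    h ∈ G.comp A g ↔ h ∈ A ∧ Relation.ReflTransGen (G.AdjIn A) g h := by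
  simp [comp]

lemma comp_subset {A : Finset E} {g : E} : G.comp A g ⊆ A := by
  intro h hh; exact (mem_comp.1 hh).1

lemma mem_comp_self {A : Finset E} {g : E} (hg : g ∈ A) : g ∈ G.comp A g :=
  mem_comp.2 ⟨hg, Relation.ReflTransGen.refl⟩

lemma comp_closed {A : Finset E} {g h h' : E} (hh : h ∈ G.comp A g)
    (hadj : G.AdjIn A h h') : h' ∈ G.comp A g :=
  mem_comp.2 ⟨hadj.2.1, (mem_comp.1 hh).2.tail hadj⟩

lemma rtg_comp_of_rtg {A : Finset E} {g h : E} (hg : g ∈ A)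
    (hr : Relation.ReflTransGen (G.AdjIn A) g h) :
    Relation.ReflTransGen (G.AdjIn (G.comp A g)) g h := by
  induction hr with
  | refl => exact Relation.ReflTransGen.refl
  | @tail b c p step ih =>
    have hb : b ∈ G.comp A g := mem_comp.2 ⟨step.1, p⟩
    have hc : c ∈ G.comp A g := comp_closed hb step
    exact ih.tail ⟨hb, hc, step.2.2⟩

lemma inc_mem_comp {A : Finset E} {g h e : E} {w : V} (hh : h ∈ G.comp A g)
    (hhw : G.Inc h w) (he : e ∈ A) (hew : G.Inc e w) : e ∈ G.comp A g :=
  comp_closed hh ⟨(mem_comp.1 hh).1, he, w, hhw, hew⟩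

lemma comp_deg {A : Finset E} {g : E} {w : V} (hw : w ∈ G.vFin (G.comp A g)) :
    G.deg (G.comp A g) w = G.deg A w := by
  obtain ⟨h, hh, hhw⟩ := mem_vFin.1 hw
  have hsub : ∀ e ∈ A, G.Inc e w → e ∈ G.comp A g := fun e he hew =>
    inc_mem_comp hh hhw he hew
  unfold deg
  apply Finset.sum_subset comp_subset
  intro e he hne
  exact mult_eq_zero_of_not_inc fun hi => hne (hsub e he hi)

/-- Union of two connected edge sets sharing a vertex is connected. -/
lemma edgeConnected_union {A B : Finset E} (hA : G.EdgeConnected A)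
    (hB : G.EdgeConnected B) {a b : E} {v' : V} (ha : a ∈ A) (hb : b ∈ B)
    (hav : G.Inc a v') (hbv : G.Inc b v') : G.EdgeConnected (A ∪ B) := by
  have hAsub : A ⊆ A ∪ B := Finset.subset_union_left
  have hBsub : B ⊆ A ∪ B := Finset.subset_union_right
  have hab : G.AdjIn (A ∪ B) a b := ⟨hAsub ha, hBsub hb, v', hav, hbv⟩
  intro e he f hf
  rcases Finset.mem_union.1 he with he' | he' <;> rcases Finset.mem_union.1 hf with hf' | hf'
  · exact rtg_mono hAsub (hA e he' f hf')
  · exact ((rtg_mono hAsub (hA e he' a ha)).tail hab).trans (rtg_mono hBsub (hB b hb f hf'))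
  · exact ((rtg_mono hBsub (hB e he' b hb)).tail (adjIn_symm hab)).trans
      (rtg_mono hAsub (hA a ha f hf'))
  · exact rtg_mono hBsub (hB e he' f hf')

/-! #### Minimum degree two subsets and the core -/

/-- Every vertex meeting `A` has degree at least two. -/
def MD2 (G : Multigraph V E) (A : Finset E) : Prop := ∀ w ∈ G.vFin A, 2 ≤ G.deg A w

/-- The maximal subset of `A` all of whose vertices have degree at least two. -/
noncomputable def core (G : Multigraph V E) (A : Finset E) : Finset E :=
  (A.powerset.filter fun B => G.MD2 B).sup id

lemma subset_core {A B : Finset E} (hBA : B ⊆ A) (hB : G.MD2 B) : B ⊆ G.core A :=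
  Finset.le_sup (f := id) (Finset.mem_filter.2 ⟨Finset.mem_powerset.2 hBA, hB⟩)

lemma core_subset {A : Finset E} : G.core A ⊆ A := by
  intro x hx
  obtain ⟨B, hB, hxB⟩ := Finset.mem_sup.1 hx
  exact Finset.mem_powerset.1 (Finset.mem_filter.1 hB).1 hxB

lemma md2_core {A : Finset E} : G.MD2 (G.core A) := by
  intro w hw
  obtain ⟨e, he, hew⟩ := mem_vFin.1 hw
  obtain ⟨B, hB, heB⟩ := Finset.mem_sup.1 he
  have hBmd2 : G.MD2 B := (Finset.mem_filter.1 hB).2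
  have hBsub : B ⊆ G.core A :=
    subset_core (Finset.mem_powerset.1 (Finset.mem_filter.1 hB).1) hBmd2
  calc 2 ≤ G.deg B w := hBmd2 w (mem_vFin.2 ⟨e, heB, hew⟩)
  _ ≤ G.deg (G.core A) w := deg_mono hBsub w

lemma exists_leaf_of_core_empty {A : Finset E} (hne : A.Nonempty)
    (hcore : G.core A = ∅) : ∃ w e, e ∈ A ∧ G.Inc e w ∧ G.deg A w = 1 := by
  by_contra hc
  push_neg at hc
  have hmd2 : G.MD2 A := by
    intro w hw
    obtain ⟨e, he, hew⟩ := mem_vFin.1 hw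
    have h1 : 0 < G.deg A w := deg_pos_iff.2 ⟨e, he, hew⟩
    have h2 : G.deg A w ≠ 1 := hc w e he hew
    omega
  have := subset_core (Finset.Subset.refl A) hmd2
  rw [hcore] at this
  obtain ⟨x, hx⟩ := hne
  exact absurd (this hx) (Finset.notMem_empty x)

lemma endsFinset_card_of_not_diag {e : E} (hd : ¬ (G.ends e).IsDiag) :
    (G.endsFinset e).card = 2 := by
  obtain ⟨⟨a, b⟩, h⟩ := Quot.exists_rep (G.ends e)
  have h' : G.ends e = s(a, b) := h.symm
  have hab : a ≠ b := by
    intro hh; apply hd; rw [h', hh]; simp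
  have : G.endsFinset e = {a, b} := by rw [endsFinset, h']; simp [Sym2.lift]
  rw [this, Finset.card_insert_of_notMem (by simpa using hab), Finset.card_singleton]

/-- Counting lemma: an edge set with no min-degree-two subset is "forest-like". -/
lemma core_empty_count : ∀ A : Finset E, G.core A = ∅ → A.Nonempty →
    A.card + 1 ≤ (G.vFin A).card := by
  intro A
  induction A using Finset.strongInduction with
  | _ A ih =>
    intro hcore hne
    obtain ⟨w, e, he, hew, hdeg⟩ := exists_leaf_of_core_empty hne hcore
    set A' := A.erase e with hA'
    have hwv : w ∈ G.vFin A := mem_vFin.2 ⟨e, he, hew⟩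
    have hnotdiag : ¬ (G.ends e).IsDiag := by
      intro hd
      obtain ⟨⟨a, b⟩, hrep⟩ := Quot.exists_rep (G.ends e)
      have h' : G.ends e = s(a, b) := hrep.symm
      have hab : a = b := by rwa [h', Sym2.isDiag_iff_proj_eq] at hd
      have hdiag : G.ends e = Sym2.diag w := by
        subst hab
        have hwa : w = a := by
          have h2 : w ∈ G.ends e := hew
          rw [h'] at h2
          simpa using h2
        rw [h', hwa]; rfl
      have h2 : G.mult e w = 2 := mult_diag_self hdiag
      have : G.mult e w ≤ G.deg A w :=
        Finset.single_le_sum (f := fun e => G.mult e w) (fun i _ => Nat.zero_le _) he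
      omega
    have hdegA' : G.deg A' w = 0 := by
      have h1 : G.deg A' w + G.mult e w = G.deg A w := deg_erase_add he w
      have h2 : G.mult e w = 1 := mult_eq_one_of_not_diag hew hnotdiag
      omega
    have hwA' : w ∉ G.vFin A' := by
      intro hw
      have := mem_vFin_iff_deg_pos.1 hw
      omega
    have hsub : G.vFin A' ⊆ (G.vFin A).erase w := by
      intro v' hv'
      refine Finset.mem_erase.2 ⟨?_, vFin_mono (Finset.erase_subset e A) hv'⟩
      intro hvw; exact hwA' (hvw ▸ hv')
    by_cases hA'ne : A'.Nonempty
    · have hcore' : G.core A' = ∅ := by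
        by_contra hc
        obtain ⟨x, hx⟩ := Finset.nonempty_of_ne_empty hc
        have : G.core A' ⊆ G.core A :=
          subset_core (core_subset.trans (Finset.erase_subset e A)) md2_core
        rw [hcore] at this
        exact absurd (this hx) (Finset.notMem_empty x)
      have hihs := ih A' (Finset.erase_ssubset he) hcore' hA'ne
      have h1 : (G.vFin A').card ≤ (G.vFin A).card - 1 := by
        have := Finset.card_le_card hsub
        rwa [Finset.card_erase_of_mem hwv] at this
      have h2 : A'.card = A.card - 1 := Finset.card_erase_of_mem he
      have h3 : 0 < A.card := Finset.card_pos.2 hne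
      have h4 : 0 < (G.vFin A).card := Finset.card_pos.2 ⟨w, hwv⟩
      omega
    · have hAe : A = {e} := by
        rw [Finset.not_nonempty_iff_eq_empty] at hA'ne
        ext x
        simp only [Finset.mem_singleton]
        constructor
        · intro hx
          by_contra hxe
          have : x ∈ A' := Finset.mem_erase.2 ⟨hxe, hx⟩
          rw [hA'ne] at this; exact absurd this (Finset.notMem_empty x)
        · intro hx; rw [hx]; exact he
      have : G.vFin A = G.endsFinset e := by
        rw [hAe]
        ext v'
        simp only [mem_vFin, Finset.mem_singleton, mem_endsFinset]
        constructor
        · rintro ⟨f, hf, hfv⟩; rwa [hf] at hfv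
        · intro hv; exact ⟨e, rfl, hv⟩
      have hc1 : A.card = 1 := by rw [hAe]; simp
      rw [hc1, this, endsFinset_card_of_not_diag hnotdiag]

/-- Key extraction lemma: a nonempty edge set with minimum degree two contains a cycle. -/
theorem exists_cycle_of_md2 : ∀ A : Finset E, G.MD2 A → A.Nonempty →
    ∃ Z ⊆ A, G.IsCycle Z := by
  intro A
  induction A using Finset.strongInduction with
  | _ A ih =>
    intro hmd2 hne
    by_cases hprop : ∃ B ⊂ A, B.Nonempty ∧ G.MD2 B
    · obtain ⟨B, hBA, hBne, hBmd2⟩ := hprop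
      obtain ⟨Z, hZB, hZ⟩ := ih B hBA hBmd2 hBne
      exact ⟨Z, hZB.trans hBA.subset, hZ⟩
    · push_neg at hprop
      -- A itself is a cycle
      obtain ⟨g, hg⟩ := hne
      -- connected
      have hKA : G.comp A g = A := by
        by_contra hne'
        have hss : G.comp A g ⊂ A := Finset.ssubset_iff_subset_ne.2 ⟨comp_subset, hne'⟩
        have hKmd2 : G.MD2 (G.comp A g) := by
          intro w hw
          rw [comp_deg hw]
          exact hmd2 w (vFin_mono comp_subset hw)
        exact hprop _ hss ⟨g, mem_comp_self hg⟩ hKmd2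
      have hconn : G.EdgeConnected A := by
        intro e he f hf
        have he' : e ∈ G.comp A g := by rw [hKA]; exact he
        have hf' : f ∈ G.comp A g := by rw [hKA]; exact hf
        exact (rtg_symm (mem_comp.1 he').2).trans (mem_comp.1 hf').2
      -- degrees
      have hdeg : ∀ w, G.deg A w = 0 ∨ G.deg A w = 2 := by
        intro w
        by_cases hw : w ∈ G.vFin A
        · right
          have h2 : 2 ≤ G.deg A w := hmd2 w hw
          by_contra hne2
          have h3 : 3 ≤ G.deg A w := by omega
          -- counting: |A| ≥ |vFin A| + 1
          have hsum : ∑ v' ∈ G.vFin A, G.deg A v' = 2 * A.card := sum_deg A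
          have hsplit : ∑ v' ∈ (G.vFin A).erase w, G.deg A v' + G.deg A w
              = ∑ v' ∈ G.vFin A, G.deg A v' := Finset.sum_erase_add _ _ hw
          have hlow : 2 * ((G.vFin A).erase w).card ≤
              ∑ v' ∈ (G.vFin A).erase w, G.deg A v' := by
            have := Finset.card_nsmul_le_sum ((G.vFin A).erase w) (fun v' => G.deg A v') 2
              (fun v' hv' => hmd2 v' (Finset.mem_of_mem_erase hv'))
            simpa [mul_comm] using this
          have hcard : ((G.vFin A).erase w).card = (G.vFin A).card - 1 :=
            Finset.card_erase_of_mem hw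
          have hvpos : 0 < (G.vFin A).card := Finset.card_pos.2 ⟨w, hw⟩
          have hAcount : (G.vFin A).card + 1 ≤ A.card := by omega
          -- remove an edge at w
          obtain ⟨e, he, hew⟩ := deg_pos_iff.1 (by omega : 0 < G.deg A w)
          set A' := A.erase e with hA'def
          have hA'ne : A'.Nonempty := by
            have : 1 ≤ (G.vFin A).card := hvpos
            have hcard' : A'.card = A.card - 1 := Finset.card_erase_of_mem he
            have : 0 < A'.card := by omega
            exact Finset.card_pos.1 this
          have hcoreA' : G.core A' = ∅ := by
            by_contra hc
            obtain ⟨x, hx⟩ := Finset.nonempty_of_ne_empty hc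
            exact hprop (G.core A') (Finset.ssubset_of_subset_of_ssubset
              (core_subset (G := G)) (Finset.erase_ssubset he)) ⟨x, hx⟩ md2_core
          have := core_empty_count A' hcoreA' hA'ne
          have hsub : G.vFin A' ⊆ G.vFin A := vFin_mono (Finset.erase_subset e A)
          have hle := Finset.card_le_card hsub
          have hcard' : A'.card = A.card - 1 := Finset.card_erase_of_mem he
          omega
        · left; exact deg_eq_zero_of_not_mem_vFin hw
      exact ⟨A, Finset.Subset.refl A, ⟨g, hg⟩, hconn, hdeg⟩

end Multigraph
namespace Multigraph

variable {V E : Type*} [DecidableEq E] {G : Multigraph V E}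

lemma cycle_deg_of_mem_vFin {Z : Finset E} (hZ : G.IsCycle Z) {w : V}
    (hw : w ∈ G.vFin Z) : G.deg Z w = 2 := by
  rcases hZ.2.2 w with h | h
  · exact absurd (mem_vFin_iff_deg_pos.1 hw) (by omega)
  · exact h

/-- A cycle contains no proper subcycle. -/
lemma cycle_no_ssubset_cycle {Z Z' : Finset E} (hZ : G.IsCycle Z) (hZ' : G.IsCycle Z')
    (hsub : Z' ⊆ Z) : Z' = Z := by
  by_contra hne
  have hss : Z' ⊂ Z := Finset.ssubset_iff_subset_ne.2 ⟨hsub, hne⟩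
  obtain ⟨h₀, hh₀A, hh₀B⟩ := Finset.exists_of_ssubset hss
  -- edges outside Z' avoid the vertices of Z'
  have hav : ∀ g ∈ Z, g ∉ Z' → ∀ w, G.Inc g w → w ∉ G.vFin Z' := by
    intro g hgZ hgZ' w hgw hw
    have h2' : G.deg Z' w = 2 := cycle_deg_of_mem_vFin hZ' hw
    have h2 : G.deg Z w = 2 := cycle_deg_of_mem_vFin hZ (vFin_mono hsub hw)
    have hd : G.deg (Z \ Z') w + G.deg Z' w = G.deg Z w := deg_sdiff_add hsub w
    have hg1 : 0 < G.deg (Z \ Z') w :=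
      deg_pos_iff.2 ⟨g, Finset.mem_sdiff.2 ⟨hgZ, hgZ'⟩, hgw⟩
    omega
  obtain ⟨g₀, hg₀⟩ := hZ'.1
  have hreach : Relation.ReflTransGen (G.AdjIn Z) g₀ h₀ := hZ.2.1 g₀ (hsub hg₀) h₀ hh₀A
  have hstay : ∀ b, Relation.ReflTransGen (G.AdjIn Z) g₀ b → b ∈ Z' := by
    intro b hb
    induction hb with
    | refl => exact hg₀
    | @tail b c p step ih =>
      obtain ⟨hbZ, hcZ, w, hbw, hcw⟩ := step
      by_contra hcZ'
      exact hav c hcZ hcZ' w hcw (mem_vFin.2 ⟨b, ih, hbw⟩)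
  exact hh₀B (hstay h₀ hreach)

lemma loop_isCycle {e : E} {w₀ : V} (hd : G.ends e = Sym2.diag w₀) : G.IsCycle {e} := by
  refine ⟨⟨e, Finset.mem_singleton_self e⟩, ?_, ?_⟩
  · intro a ha b hb
    rw [Finset.mem_singleton] at ha hb
    rw [ha, hb]
  · intro w
    have hdeg : G.deg {e} w = G.mult e w := Finset.sum_singleton _ _
    by_cases hw : w = w₀
    · right; rw [hdeg, hw]; exact mult_diag_self hd
    · left
      rw [hdeg]
      apply mult_eq_zero_of_not_inc
      intro hi
      exact hw (inc_eq_of_diag hd hi)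

lemma cycle_eq_of_loop_mem {Z : Finset E} {e : E} {w₀ : V} (hZ : G.IsCycle Z)
    (he : e ∈ Z) (hd : G.ends e = Sym2.diag w₀) : Z = {e} :=
  (cycle_no_ssubset_cycle hZ (loop_isCycle hd) (Finset.singleton_subset_iff.2 he)).symm

/-- A cycle has as many vertices as edges. -/
lemma cycle_card {Z : Finset E} (hZ : G.IsCycle Z) : (G.vFin Z).card = Z.card := by
  have h1 : ∑ w ∈ G.vFin Z, G.deg Z w = 2 * Z.card := sum_deg Z
  have h2 : ∑ w ∈ G.vFin Z, G.deg Z w = 2 * (G.vFin Z).card := by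
    rw [Finset.sum_congr rfl fun w hw => cycle_deg_of_mem_vFin hZ hw]
    simp [mul_comm]
  omega

/-- Any edge of a connected set reaches, after deleting `e`, an edge adjacent to `e`. -/
lemma reach_adj_of_erase {C : Finset E} {e : E} (hC : G.EdgeConnected C) (he : e ∈ C)
    {g : E} (hg : g ∈ C.erase e) :
    ∃ g' ∈ C.erase e, Relation.ReflTransGen (G.AdjIn (C.erase e)) g g' ∧
      ∃ v', G.Inc g' v' ∧ G.Inc e v' := by
  have hreach : Relation.ReflTransGen (G.AdjIn C) g e :=
    hC g (Finset.mem_of_mem_erase hg) e he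
  have hge : g ≠ e := (Finset.mem_erase.1 hg).1
  have main : ∀ b, Relation.ReflTransGen (G.AdjIn C) g b →
      (∃ g' ∈ C.erase e, Relation.ReflTransGen (G.AdjIn (C.erase e)) g g' ∧
        ∃ v', G.Inc g' v' ∧ G.Inc e v') ∨
      (b ≠ e ∧ b ∈ C.erase e ∧ Relation.ReflTransGen (G.AdjIn (C.erase e)) g b) := by
    intro b hb
    induction hb with
    | refl => exact Or.inr ⟨hge, hg, Relation.ReflTransGen.refl⟩
    | @tail b c p step ih =>
      rcases ih with h | ⟨hbne, hbe, hrt⟩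
      · exact Or.inl h
      · obtain ⟨hbC, hcC, v', hbv, hcv⟩ := step
        by_cases hce : c = e
        · exact Or.inl ⟨b, hbe, hrt, v', hbv, hce ▸ hcv⟩
        · exact Or.inr ⟨hce, Finset.mem_erase.2 ⟨hce, hcC⟩,
            hrt.tail ⟨hbe, Finset.mem_erase.2 ⟨hce, hcC⟩, v', hbv, hcv⟩⟩
  rcases main e hreach with h | ⟨hne', _, _⟩
  · exact h
  · exact absurd rfl hne'

/-- Deleting an edge of a cycle keeps the cycle connected. -/
lemma cycle_erase_connected {Z : Finset E} {e : E} (hZ : G.IsCycle Z) (he : e ∈ Z) :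
    G.EdgeConnected (Z.erase e) := by
  by_cases hd : (G.ends e).IsDiag
  · obtain ⟨⟨a, b⟩, hrep⟩ := Quot.exists_rep (G.ends e)
    have h' : G.ends e = s(a, b) := hrep.symm
    have hab : a = b := by rwa [h', Sym2.isDiag_iff_proj_eq] at hd
    subst hab
    have hZe : Z = {e} := cycle_eq_of_loop_mem hZ he (by rw [h']; rfl)
    intro g hg
    exfalso
    rw [hZe] at hg
    simp at hg
  · -- e has two distinct endpoints u ≠ w
    obtain ⟨⟨u, w⟩, hrep⟩ := Quot.exists_rep (G.ends e)
    have h' : G.ends e = s(u, w) := hrep.symm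
    have huw : u ≠ w := by
      intro hh; apply hd; rw [h', hh]; simp
    have hincu : G.Inc e u := by rw [Inc, h']; simp
    have hincw : G.Inc e w := by rw [Inc, h']; simp
    have hdege : ∀ v', G.Inc e v' → G.deg (Z.erase e) v' = 1 := by
      intro v' hv'
      have h2 : G.deg Z v' = 2 := cycle_deg_of_mem_vFin hZ (mem_vFin.2 ⟨e, he, hv'⟩)
      have h3 : G.deg (Z.erase e) v' + G.mult e v' = G.deg Z v' := deg_erase_add he v'
      have h4 : G.mult e v' = 1 := mult_eq_one_of_not_diag hv' hd
      omega
    -- each component of Z.erase e contains both u and w among its vertices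
    have key : ∀ g ∈ Z.erase e, u ∈ G.vFin (G.comp (Z.erase e) g) ∧
        w ∈ G.vFin (G.comp (Z.erase e) g) := by
      intro g hg
      set K := G.comp (Z.erase e) g with hK
      have hKsub : K ⊆ Z.erase e := comp_subset
      have hKZ : K ⊆ Z := hKsub.trans (Finset.erase_subset e Z)
      have hdegK : ∀ v' ∈ G.vFin K, G.deg K v' = G.deg (Z.erase e) v' := fun v' hv' =>
        comp_deg hv'
      -- not all degrees in K can be 2
      have hnot2 : ∃ v₀ ∈ G.vFin K, G.deg K v₀ = 1 ∧ G.Inc e v₀ := by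
        by_contra hall
        push_neg at hall
        have hmd2 : G.MD2 K := by
          intro v' hv'
          have h1 : 0 < G.deg K v' := mem_vFin_iff_deg_pos.1 hv'
          have h2 : G.deg K v' = G.deg (Z.erase e) v' := hdegK v' hv'
          have h3 : G.deg (Z.erase e) v' + G.mult e v' = G.deg Z v' := by
            exact deg_erase_add he v'
          have h4 : G.deg Z v' = 2 :=
            cycle_deg_of_mem_vFin hZ (vFin_mono hKZ hv')
          by_cases hiv : G.Inc e v'
          · have h5 : G.mult e v' = 1 := mult_eq_one_of_not_diag hiv hd
            have h6 : G.deg K v' ≠ 1 := fun h1' => hall v' hv' h1' hiv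
            omega
          · have h5 : G.mult e v' = 0 := mult_eq_zero_of_not_inc hiv
            omega
        obtain ⟨Z'', hZ''K, hZ''⟩ := exists_cycle_of_md2 K hmd2 ⟨g, mem_comp_self hg⟩
        have := cycle_no_ssubset_cycle hZ hZ'' (hZ''K.trans hKZ)
        have heZ'' : e ∈ Z'' := by rw [this]; exact he
        exact (Finset.mem_erase.1 (hKsub (hZ''K heZ''))).1 rfl
      obtain ⟨v₀, hv₀K, hv₀deg, hv₀inc⟩ := hnot2
      -- parity: if one endpoint of e is in vFin K, so is the other
      have par : ∀ v₁ v₂ : V, G.ends e = s(v₁, v₂) → v₁ ∈ G.vFin K →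
          v₂ ∈ G.vFin K := by
        intro v₁ v₂ h12 hv₁ 
        by_contra hv₂
        have hne12 : v₁ ≠ v₂ := by
          intro hh; apply hd; rw [h12, hh]; simp
        have hdeg1 : G.deg K v₁ = 1 := by
          rw [hdegK v₁ hv₁]
          exact hdege v₁ (by rw [Inc, h12]; simp)
        have hdeg2 : ∀ v' ∈ (G.vFin K).erase v₁, G.deg K v' = 2 := by
          intro v' hv'
          obtain ⟨hv'ne, hv'K⟩ := Finset.mem_erase.1 hv'
          have hni : ¬ G.Inc e v' := by
            intro hi
            rw [Inc, h12, Sym2.mem_iff] at hi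
            rcases hi with h | h
            · exact hv'ne h
            · exact hv₂ (h ▸ hv'K)
          have h3 : G.deg (Z.erase e) v' + G.mult e v' = G.deg Z v' := deg_erase_add he v'
          have h4 : G.deg Z v' = 2 := cycle_deg_of_mem_vFin hZ (vFin_mono hKZ hv'K)
          have h5 : G.mult e v' = 0 := mult_eq_zero_of_not_inc hni
          rw [hdegK v' hv'K]
          omega
        have hsum : ∑ v' ∈ G.vFin K, G.deg K v' = 2 * K.card := sum_deg K
        have hsplit : ∑ v' ∈ (G.vFin K).erase v₁, G.deg K v' + G.deg K v₁
            = ∑ v' ∈ G.vFin K, G.deg K v' := Finset.sum_erase_add _ _ hv₁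
        have hconst : ∑ v' ∈ (G.vFin K).erase v₁, G.deg K v' =
            2 * ((G.vFin K).erase v₁).card := by
          rw [Finset.sum_congr rfl hdeg2]
          simp [mul_comm]
        have hfin : 2 * ((G.vFin K).erase v₁).card + 1 = 2 * K.card := by
          rw [← hdeg1, ← hconst, hsplit, hsum]
        omega
      -- v₀ is u or w
      have hv₀uw : v₀ = u ∨ v₀ = w := by
        have := hv₀inc
        rw [Inc, h', Sym2.mem_iff] at this
        exact this
      rcases hv₀uw with h | h
      · subst h
        exact ⟨hv₀K, par v₀ w h' hv₀K⟩
      · subst h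
        exact ⟨par v₀ u (by rw [h']; exact Sym2.eq_swap) hv₀K, hv₀K⟩
    -- now glue
    intro g hg h hh
    obtain ⟨hgu, _⟩ := key g hg
    obtain ⟨hhu, _⟩ := key h hh
    obtain ⟨p, hpK, hpu⟩ := mem_vFin.1 hgu
    obtain ⟨q, hqK, hqu⟩ := mem_vFin.1 hhu
    have hq' : q ∈ G.comp (Z.erase e) g := by
      apply inc_mem_comp hpK hpu (comp_subset hqK) hqu
    have h1 : Relation.ReflTransGen (G.AdjIn (Z.erase e)) g q := (mem_comp.1 hq').2
    have h2 : Relation.ReflTransGen (G.AdjIn (Z.erase e)) h q := (mem_comp.1 hqK).2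
    exact h1.trans (rtg_symm h2)

end Multigraph
namespace Multigraph

variable {V E : Type*} [DecidableEq E] {G : Multigraph V E}

lemma erase_subset_erase_of_subset {C Z : Finset E} {e : E} (h : Z ⊆ C) :
    Z.erase e ⊆ C.erase e := fun x hx =>
  Finset.mem_erase.2 ⟨(Finset.mem_erase.1 hx).1, h (Finset.mem_erase.1 hx).2⟩

lemma exists_edge_at_of_cycle_erase {Z : Finset E} {e : E} (hZ : G.IsCycle Z)
    (he : e ∈ Z) (hd : ¬ (G.ends e).IsDiag) {v' : V} (hv' : G.Inc e v') :
    ∃ z ∈ Z.erase e, G.Inc z v' := by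
  have h2 : G.deg Z v' = 2 := cycle_deg_of_mem_vFin hZ (mem_vFin.2 ⟨e, he, hv'⟩)
  have h3 : G.deg (Z.erase e) v' + G.mult e v' = G.deg Z v' := deg_erase_add he v'
  have h4 : G.mult e v' = 1 := mult_eq_one_of_not_diag hv' hd
  exact deg_pos_iff.1 (by omega)

lemma exists_diag_rep {e : E} (hd : (G.ends e).IsDiag) :
    ∃ w₀, G.ends e = Sym2.diag w₀ := by
  obtain ⟨⟨a, b⟩, hrep⟩ := Quot.exists_rep (G.ends e)
  have h' : G.ends e = s(a, b) := hrep.symm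
  rw [h'] at hd
  have hab : a = b := Sym2.mk_isDiag_iff.1 hd
  exact ⟨a, by rw [h', ← hab]; rfl⟩

/-- Removing an edge lying on a cycle keeps a connected set connected. -/
lemma erase_cycle_edge_connected {C Z : Finset E} {e : E} (hC : G.EdgeConnected C)
    (hZ : G.IsCycle Z) (hZC : Z ⊆ C) (he : e ∈ Z) : G.EdgeConnected (C.erase e) := by
  intro g hg h hh
  obtain ⟨g', hg', hgg', v₁, hg'v, hev₁⟩ := reach_adj_of_erase hC (hZC he) hg
  obtain ⟨h', hh', hhh', v₂, hh'v, hev₂⟩ := reach_adj_of_erase hC (hZC he) hh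
  have hZer : Z.erase e ⊆ C.erase e := erase_subset_erase_of_subset hZC
  by_cases hd : (G.ends e).IsDiag
  · obtain ⟨w₀, hdiag⟩ := exists_diag_rep hd
    have hv₁ : v₁ = w₀ := inc_eq_of_diag hdiag hev₁
    have hv₂ : v₂ = w₀ := inc_eq_of_diag hdiag hev₂
    have hadj : G.AdjIn (C.erase e) g' h' :=
      ⟨hg', hh', w₀, hv₁ ▸ hg'v, hv₂ ▸ hh'v⟩
    exact (hgg'.tail hadj).trans (rtg_symm hhh')
  · obtain ⟨⟨u, w⟩, hrep⟩ := Quot.exists_rep (G.ends e)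
    have hew : G.ends e = s(u, w) := hrep.symm
    obtain ⟨z₁, hz₁, hz₁v⟩ := exists_edge_at_of_cycle_erase hZ he hd hev₁
    obtain ⟨z₂, hz₂, hz₂v⟩ := exists_edge_at_of_cycle_erase hZ he hd hev₂
    have hzz : Relation.ReflTransGen (G.AdjIn (C.erase e)) z₁ z₂ :=
      rtg_mono hZer (cycle_erase_connected hZ he z₁ hz₁ z₂ hz₂)
    have step1 : G.AdjIn (C.erase e) g' z₁ := ⟨hg', hZer hz₁, v₁, hg'v, hz₁v⟩
    have step2 : G.AdjIn (C.erase e) z₂ h' := ⟨hZer hz₂, hh', v₂, hz₂v, hh'v⟩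
    exact ((((hgg'.tail step1).trans hzz).tail step2).trans (rtg_symm hhh'))

/-- Removing a cycle edge does not change the vertex set. -/
lemma erase_cycle_edge_vFin {C Z : Finset E} {e : E} (hC : G.EdgeConnected C)
    (hZ : G.IsCycle Z) (hZC : Z ⊆ C) (he : e ∈ Z) (hne : (C.erase e).Nonempty) :
    G.vFin (C.erase e) = G.vFin C := by
  apply Finset.Subset.antisymm (vFin_mono (Finset.erase_subset e C))
  intro v' hv'
  obtain ⟨f, hf, hfv⟩ := mem_vFin.1 hv'
  by_cases hfe : f = e
  · subst hfe
    by_cases hd : (G.ends f).IsDiag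
    · obtain ⟨g, hg⟩ := hne
      obtain ⟨g', hg', _, v₂, hg'v, hev₂⟩ := reach_adj_of_erase hC (hZC he) hg
      obtain ⟨w₀, hdiag⟩ := exists_diag_rep hd
      have hv' : v' = w₀ := inc_eq_of_diag hdiag hfv
      have hv₂ : v₂ = w₀ := inc_eq_of_diag hdiag hev₂
      exact mem_vFin.2 ⟨g', hg', by rw [hv', ← hv₂]; exact hg'v⟩
    · obtain ⟨z, hz, hzv⟩ := exists_edge_at_of_cycle_erase hZ he hd hfv
      exact mem_vFin.2 ⟨z, erase_subset_erase_of_subset hZC hz, hzv⟩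
  · exact mem_vFin.2 ⟨f, Finset.mem_erase.2 ⟨hfe, hf⟩, hfv⟩

end Multigraph
namespace Multigraph

variable {V E : Type*} [DecidableEq E] {G : Multigraph V E}

lemma exists_adj_outside {A B : Finset E} (hA : G.EdgeConnected A) (hBA : B ⊆ A)
    (hne : B.Nonempty) (hne' : B ≠ A) :
    ∃ e ∈ A, e ∉ B ∧ ∃ b ∈ B, ∃ v', G.Inc b v' ∧ G.Inc e v' := by
  obtain ⟨b₀, hb₀⟩ := hne
  obtain ⟨a₀, ha₀A, ha₀B⟩ :=
    Finset.exists_of_ssubset (Finset.ssubset_iff_subset_ne.2 ⟨hBA, hne'⟩)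
  have hr := hA b₀ (hBA hb₀) a₀ ha₀A
  have main : ∀ c, Relation.ReflTransGen (G.AdjIn A) b₀ c → c ∈ B ∨
      (∃ e ∈ A, e ∉ B ∧ ∃ b ∈ B, ∃ v', G.Inc b v' ∧ G.Inc e v') := by
    intro c hc
    induction hc with
    | refl => exact Or.inl hb₀
    | @tail b c p step ih =>
      rcases ih with hbB | h
      · by_cases hcB : c ∈ B
        · exact Or.inl hcB
        · exact Or.inr ⟨c, step.2.1, hcB, b, hbB, step.2.2⟩
      · exact Or.inr h
  rcases main a₀ hr with h | h
  · exact absurd h ha₀B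
  · exact h

lemma vFin_insert {A : Finset E} {e : E} :
    G.vFin (insert e A) = G.endsFinset e ∪ G.vFin A := by
  ext w
  simp only [mem_vFin, Finset.mem_union, mem_endsFinset, Finset.mem_insert]
  constructor
  · rintro ⟨f, hf | hf, hfw⟩
    · exact Or.inl (hf ▸ hfw)
    · exact Or.inr ⟨f, hf, hfw⟩
  · rintro (h | ⟨f, hf, hfw⟩)
    · exact ⟨e, Or.inl rfl, h⟩
    · exact ⟨f, Or.inr hf, hfw⟩

/-- Growth lemma: a connected extension of `B` adds at most one vertex per edge. -/
lemma vFin_grow {A : Finset E} (hA : G.EdgeConnected A) (k : ℕ) :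
    ∀ n (B : Finset E), (A \ B).card = n → B ⊆ A → B.Nonempty →
      (G.vFin B).card ≤ B.card + k → (G.vFin A).card ≤ A.card + k := by
  intro n
  induction n using Nat.strong_induction_on with
  | _ n ih =>
    intro B hn hBA hBne hB
    by_cases hEq : B = A
    · rwa [hEq] at hB
    · obtain ⟨e, heA, heB, b, hbB, v', hbv, hev⟩ := exists_adj_outside hA hBA hBne hEq
      have hv'B : v' ∈ G.vFin B := mem_vFin.2 ⟨b, hbB, hbv⟩
      have hcard : (G.vFin (insert e B)).card ≤ (G.vFin B).card + 1 := by
        rw [vFin_insert]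
        have h1 : (G.endsFinset e \ G.vFin B).card + (G.vFin B).card
            = (G.endsFinset e ∪ G.vFin B).card := Finset.card_sdiff_add_card ..
        have h2 : G.endsFinset e \ G.vFin B ⊆ (G.endsFinset e).erase v' := by
          intro x hx
          obtain ⟨hx1, hx2⟩ := Finset.mem_sdiff.1 hx
          exact Finset.mem_erase.2 ⟨fun hh => hx2 (hh ▸ hv'B), hx1⟩
        have h3 : ((G.endsFinset e).erase v').card ≤ 1 := by
          have := Finset.card_erase_of_mem (mem_endsFinset.2 hev)
          have := endsFinset_card_le (G := G) e
          omega
        have := Finset.card_le_card h2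
        omega
      have hmeas : (A \ insert e B).card < n := by
        have h4 : A \ insert e B = (A \ B).erase e := by
          ext x
          simp only [Finset.mem_sdiff, Finset.mem_erase, Finset.mem_insert]
          tauto
        rw [h4, Finset.card_erase_of_mem (Finset.mem_sdiff.2 ⟨heA, heB⟩), hn]
        have : 0 < (A \ B).card := Finset.card_pos.2 ⟨e, Finset.mem_sdiff.2 ⟨heA, heB⟩⟩
        omega
      refine ih _ hmeas (insert e B) rfl (Finset.insert_subset heA hBA)
        ⟨b, Finset.mem_insert_of_mem hbB⟩ ?_
      rw [Finset.card_insert_of_notMem heB]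
      omega

lemma connected_count {A : Finset E} (hA : G.EdgeConnected A) (hne : A.Nonempty) :
    (G.vFin A).card ≤ A.card + 1 := by
  obtain ⟨a₀, ha₀⟩ := hne
  refine vFin_grow hA 1 _ {a₀} rfl (Finset.singleton_subset_iff.2 ha₀) (Finset.singleton_nonempty a₀) ?_
  have : G.vFin {a₀} = G.endsFinset a₀ := by
    ext w; simp [mem_vFin, mem_endsFinset]
  rw [this, Finset.card_singleton]
  have := endsFinset_card_le (G := G) a₀
  omega

lemma connected_count_with_cycle {C Z : Finset E} (hC : G.EdgeConnected C)
    (hZ : G.IsCycle Z) (hZC : Z ⊆ C) : (G.vFin C).card ≤ C.card := by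
  refine vFin_grow hC 0 _ Z rfl hZC hZ.1 ?_
  rw [cycle_card hZ]
  omega

lemma connected_count_two_cycles {C Z Z' : Finset E} (hC : G.EdgeConnected C)
    (hZ : G.IsCycle Z) (hZ' : G.IsCycle Z') (hZC : Z ⊆ C) (hZ'C : Z' ⊆ C)
    (hne : Z ≠ Z') : (G.vFin C).card + 1 ≤ C.card := by
  have hnsub : ¬ Z ⊆ Z' := fun hsub => hne (cycle_no_ssubset_cycle hZ' hZ hsub)
  obtain ⟨e, heZ, heZ'⟩ := Finset.not_subset.1 hnsub
  have heC : e ∈ C := hZC heZ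
  obtain ⟨z', hz'⟩ := hZ'.1
  have hz'er : z' ∈ C.erase e :=
    Finset.mem_erase.2 ⟨fun hh => heZ' (hh ▸ hz'), hZ'C hz'⟩
  have hconn' := erase_cycle_edge_connected hC hZ hZC heZ
  have hvfin := erase_cycle_edge_vFin hC hZ hZC heZ ⟨z', hz'er⟩
  have hZ'sub : Z' ⊆ C.erase e := fun x hx =>
    Finset.mem_erase.2 ⟨fun hh => heZ' (hh ▸ hx), hZ'C hx⟩
  have := connected_count_with_cycle hconn' hZ' hZ'sub
  rw [hvfin] at this
  have := Finset.card_erase_of_mem heC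
  have : 0 < C.card := Finset.card_pos.2 ⟨e, heC⟩
  omega

/-- Counting bound for a set whose cycles are unique. -/
lemma count_of_unique_cycle {K : Finset E}
    (huniq : ∀ Z ⊆ K, ∀ Z' ⊆ K, G.IsCycle Z → G.IsCycle Z' → Z = Z') :
    K.card ≤ (G.vFin K).card := by
  by_cases hcyc : ∃ Z ⊆ K, G.IsCycle Z
  · obtain ⟨Z, hZK, hZ⟩ := hcyc
    obtain ⟨e, he⟩ := hZ.1
    have heK : e ∈ K := hZK he
    by_cases hK' : (K.erase e).Nonempty
    · have hcore : G.core (K.erase e) = ∅ := by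
        by_contra hc
        obtain ⟨x, hx⟩ := Finset.nonempty_of_ne_empty hc
        obtain ⟨Z'', hZ''c, hZ''⟩ :=
          exists_cycle_of_md2 _ (md2_core (G := G)) ⟨x, hx⟩
        have hZ''K : Z'' ⊆ K.erase e := hZ''c.trans core_subset
        have := huniq Z hZK Z'' (hZ''K.trans (Finset.erase_subset e K)) hZ hZ''
        have heZ'' : e ∈ Z'' := by rw [← this]; exact he
        exact (Finset.mem_erase.1 (hZ''K heZ'')).1 rfl
      have := core_empty_count (K.erase e) hcore hK'
      have h1 : G.vFin (K.erase e) ⊆ G.vFin K := vFin_mono (Finset.erase_subset e K)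
      have := Finset.card_le_card h1
      have := Finset.card_erase_of_mem heK
      have : 0 < K.card := Finset.card_pos.2 ⟨e, heK⟩
      omega
    · have hKe : K = {e} := by
        rw [Finset.not_nonempty_iff_eq_empty] at hK'
        ext x
        simp only [Finset.mem_singleton]
        constructor
        · intro hx
          by_contra hxe
          have : x ∈ K.erase e := Finset.mem_erase.2 ⟨hxe, hx⟩
          rw [hK'] at this
          exact absurd this (Finset.notMem_empty x)
        · intro hx; exact hx ▸ heK
      have hc1 : K.card = 1 := by rw [hKe]; simp
      obtain ⟨v', hv'⟩ := endsFinset_nonempty (G := G) e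
      have hv'K : v' ∈ G.vFin K := mem_vFin.2 ⟨e, heK, mem_endsFinset.1 hv'⟩
      have hpos := Finset.card_pos.2 ⟨v', hv'K⟩
      omega
  · by_cases hKne : K.Nonempty
    · have hcore : G.core K = ∅ := by
        by_contra hc
        obtain ⟨x, hx⟩ := Finset.nonempty_of_ne_empty hc
        obtain ⟨Z'', hZ''c, hZ''⟩ :=
          exists_cycle_of_md2 _ (md2_core (G := G)) ⟨x, hx⟩
        exact hcyc ⟨Z'', hZ''c.trans core_subset, hZ''⟩
      have := core_empty_count K hcore hKne
      omega
    · rw [Finset.not_nonempty_iff_eq_empty] at hKne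
      simp [hKne]

/-- Counting bound for edge sets whose components have unique cycles. -/
lemma count_componentwise : ∀ A : Finset E,
    (∀ Z ⊆ A, ∀ Z' ⊆ A, G.IsCycle Z → G.IsCycle Z' →
      (∃ e₁ ∈ Z, ∃ e₂ ∈ Z', Relation.ReflTransGen (G.AdjIn A) e₁ e₂) → Z = Z') →
    A.card ≤ (G.vFin A).card := by
  intro A
  induction A using Finset.strongInduction with
  | _ A ih =>
    intro H
    by_cases hne : A.Nonempty
    · obtain ⟨g, hg⟩ := hne
      set K := G.comp A g with hK
      have hKA : K ⊆ A := comp_subset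
      have hgK : g ∈ K := mem_comp_self hg
      -- bound for K
      have hKbound : K.card ≤ (G.vFin K).card := by
        apply count_of_unique_cycle
        intro Z hZK Z' hZ'K hZ hZ'
        apply H Z (hZK.trans hKA) Z' (hZ'K.trans hKA) hZ hZ'
        obtain ⟨e₁, he₁⟩ := hZ.1
        obtain ⟨e₂, he₂⟩ := hZ'.1
        refine ⟨e₁, he₁, e₂, he₂, ?_⟩
        have h1 := (mem_comp.1 (hZK he₁)).2
        have h2 := (mem_comp.1 (hZ'K he₂)).2
        exact (rtg_symm h1).trans h2
      -- bound for the rest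
      have hrest : (A \ K).card ≤ (G.vFin (A \ K)).card := by
        apply ih (A \ K) (Finset.sdiff_ssubset hKA ⟨g, hgK⟩)
        intro Z hZ Z' hZ' hc hc' hchain
        apply H Z (hZ.trans (Finset.sdiff_subset)) Z' (hZ'.trans (Finset.sdiff_subset))
          hc hc'
        obtain ⟨e₁, he₁, e₂, he₂, hr⟩ := hchain
        exact ⟨e₁, he₁, e₂, he₂, rtg_mono Finset.sdiff_subset hr⟩
      -- vertex sets are disjoint
      have hdisj : Disjoint (G.vFin K) (G.vFin (A \ K)) := by
        rw [Finset.disjoint_left]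
        intro v' hv1 hv2
        obtain ⟨p, hp, hpv⟩ := mem_vFin.1 hv1
        obtain ⟨q, hq, hqv⟩ := mem_vFin.1 hv2
        have : q ∈ K := inc_mem_comp hp hpv (Finset.mem_sdiff.1 hq).1 hqv
        exact (Finset.mem_sdiff.1 hq).2 this
      have hunion : G.vFin A = G.vFin K ∪ G.vFin (A \ K) := by
        rw [← vFin_union, Finset.union_sdiff_of_subset hKA]
      have hcards : (G.vFin A).card = (G.vFin K).card + (G.vFin (A \ K)).card := by
        rw [hunion, Finset.card_union_of_disjoint hdisj]
      have hAcard : A.card = K.card + (A \ K).card := by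
        rw [add_comm, Finset.card_sdiff_add_card_eq_card hKA]
      omega
    · rw [Finset.not_nonempty_iff_eq_empty] at hne
      simp [hne]

/-! #### Parity lemmas -/

lemma cycle_even_deg {Z : Finset E} (hZ : G.IsCycle Z) (w : V) : Even (G.deg Z w) := by
  rcases hZ.2.2 w with h | h <;> rw [h] <;> decide

lemma exists_cycle_of_even {A : Finset E} (h : ∀ w, Even (G.deg A w))
    (hne : A.Nonempty) : ∃ Z ⊆ A, G.IsCycle Z := by
  apply exists_cycle_of_md2 A _ hne
  intro w hw
  have h1 : 0 < G.deg A w := mem_vFin_iff_deg_pos.1 hw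
  obtain ⟨k, hk⟩ := h w
  omega

lemma even_deg_symmDiff {A B : Finset E} (hA : ∀ w, Even (G.deg A w))
    (hB : ∀ w, Even (G.deg B w)) (w : V) : Even (G.deg (A ∆ B) w) := by
  have hd : A ∆ B = (A \ B) ∪ (B \ A) := by
    ext x
    simp only [Finset.mem_symmDiff, Finset.mem_union, Finset.mem_sdiff]
  have hdisj : Disjoint (A \ B) (B \ A) := by
    rw [Finset.disjoint_left]
    intro x h1 h2
    exact (Finset.mem_sdiff.1 h1).2 (Finset.mem_sdiff.1 h2).1
  have h1 : G.deg (A ∆ B) w = G.deg (A \ B) w + G.deg (B \ A) w := by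
    rw [hd, deg_union_of_disjoint hdisj]
  have h2 : G.deg (A \ B) w + G.deg (A ∩ B) w = G.deg A w := by
    have := deg_sdiff_add (A := A) (B := A ∩ B) (G := G) Finset.inter_subset_left w
    rwa [Finset.sdiff_inter_self_left] at this
  have h3 : G.deg (B \ A) w + G.deg (A ∩ B) w = G.deg B w := by
    have := deg_sdiff_add (A := B) (B := B ∩ A) (G := G) Finset.inter_subset_left w
    rwa [Finset.sdiff_inter_self_left, Finset.inter_comm] at this
  obtain ⟨a, ha⟩ := hA w
  obtain ⟨b, hb⟩ := hB w
  rw [Nat.even_iff] at *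
  omega

lemma even_deg_sdiff {Z D : Finset E} (hZD : Z ⊆ D) (hD : ∀ w, Even (G.deg D w))
    (hZ : ∀ w, Even (G.deg Z w)) (w : V) : Even (G.deg (D \ Z) w) := by
  have h1 : G.deg (D \ Z) w + G.deg Z w = G.deg D w := deg_sdiff_add hZD w
  obtain ⟨a, ha⟩ := hD w
  obtain ⟨b, hb⟩ := hZ w
  rw [Nat.even_iff]
  omega

end Multigraph
namespace LinearBiasedGraph

open Multigraph

variable {V E : Type*} [DecidableEq E] {Ω : LinearBiasedGraph V E}

lemma frameIndep_subset {A B : Finset E} (hB : Ω.FrameIndep B) (hAB : A ⊆ B) :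
    Ω.FrameIndep A := by
  constructor
  · intro C hC hcyc
    exact hB.1 C (hC.trans hAB) hcyc
  · intro C₁ C₂ h1 h2 hc1 hc2 hne e₁ he₁ e₂ he₂ hr
    exact hB.2 C₁ C₂ (h1.trans hAB) (h2.trans hAB) hc1 hc2 hne e₁ he₁ e₂ he₂
      (rtg_mono hAB hr)

lemma dep_superset {A B : Finset E} (hA : ¬ Ω.FrameIndep A) (h : A ⊆ B) :
    ¬ Ω.FrameIndep B := fun hB => hA (frameIndep_subset hB h)

lemma dep_of_bal {Z A : Finset E} (hZ : Ω.G.IsCycle Z) (hbal : Z ∈ Ω.Bal)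
    (hZA : Z ⊆ A) : ¬ Ω.FrameIndep A := fun hA => hA.1 Z hZA hZ hbal

lemma dep_of_two_cycles {Z Z' A : Finset E} (hZ : Ω.G.IsCycle Z) (hZ' : Ω.G.IsCycle Z')
    (hZA : Z ⊆ A) (hZ'A : Z' ⊆ A) (hne : Z ≠ Z') {e₁ e₂ : E} (he₁ : e₁ ∈ Z)
    (he₂ : e₂ ∈ Z') (hr : Relation.ReflTransGen (Ω.G.AdjIn A) e₁ e₂) :
    ¬ Ω.FrameIndep A := fun hA => hA.2 Z Z' hZA hZ'A hZ hZ' hne e₁ he₁ e₂ he₂ hr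

lemma exists_frameCircuit : ∀ A : Finset E, ¬ Ω.FrameIndep A →
    ∃ C ⊆ A, Ω.FrameCircuit C := by
  intro A
  induction A using Finset.strongInduction with
  | _ A ih =>
    intro hdep
    by_cases h : ∀ C' ⊂ A, Ω.FrameIndep C'
    · exact ⟨A, Finset.Subset.refl A, hdep, h⟩
    · push_neg at h
      obtain ⟨C', hC'A, hC'dep⟩ := h
      obtain ⟨C, hCC', hC⟩ := ih C' hC'A hC'dep
      exact ⟨C, hCC'.trans hC'A.subset, hC⟩

lemma frameCircuit_subset_eq {C D : Finset E} (hC : Ω.FrameCircuit C)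
    (hD : Ω.FrameCircuit D) (h : C ⊆ D) : C = D := by
  by_contra hne
  exact hC.1 (hD.2 C (Finset.ssubset_iff_subset_ne.2 ⟨h, hne⟩))


lemma frameCircuit_dep_cases (hdep : ¬ Ω.FrameIndep (C : Finset E)) :
    (∃ Z ⊆ C, Ω.G.IsCycle Z ∧ Z ∈ Ω.Bal) ∨
    (∃ Z Z' : Finset E, Z ⊆ C ∧ Z' ⊆ C ∧ Ω.G.IsCycle Z ∧ Ω.G.IsCycle Z' ∧ Z ≠ Z' ∧
      ∃ e₁ ∈ Z, ∃ e₂ ∈ Z', Relation.ReflTransGen (Ω.G.AdjIn C) e₁ e₂) := by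
  rw [FrameIndep, not_and_or] at hdep
  rcases hdep with h | h
  · left
    push_neg at h
    obtain ⟨Z, hZC, hZcyc, hZbal⟩ := h
    exact ⟨Z, hZC, hZcyc, hZbal⟩
  · right
    push_neg at h
    obtain ⟨Z, Z', hZC, hZ'C, hZcyc, hZ'cyc, hne, e₁, he₁, e₂, he₂, hr⟩ := h
    exact ⟨Z, Z', hZC, hZ'C, hZcyc, hZ'cyc, hne, e₁, he₁, e₂, he₂, hr⟩

/-- A circuit of the frame matroid is edge-connected. -/
lemma frameCircuit_connected {C : Finset E} (hC : Ω.FrameCircuit C) :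
    Ω.G.EdgeConnected C := by
  have key : ∃ g ∈ C, Ω.G.comp C g = C := by
    rcases frameCircuit_dep_cases hC.1 with ⟨Z, hZC, hZcyc, hZbal⟩ |
        ⟨Z, Z', hZC, hZ'C, hZcyc, hZ'cyc, hne, e₁, he₁, e₂, he₂, hr⟩
    · obtain ⟨g, hg⟩ := hZcyc.1
      refine ⟨g, hZC hg, ?_⟩
      set K := Ω.G.comp C g with hK
      have hZK : Z ⊆ K := fun z hz =>
        mem_comp.2 ⟨hZC hz, rtg_mono hZC (hZcyc.2.1 g hg z hz)⟩
      have hdepK : ¬ Ω.FrameIndep K := dep_of_bal hZcyc hZbal hZK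
      by_contra hne'
      exact hdepK (hC.2 K (Finset.ssubset_iff_subset_ne.2 ⟨comp_subset, hne'⟩))
    · refine ⟨e₁, hZC he₁, ?_⟩
      set K := Ω.G.comp C e₁ with hK
      have hZK : Z ⊆ K := fun z hz =>
        mem_comp.2 ⟨hZC hz, rtg_mono hZC (hZcyc.2.1 e₁ he₁ z hz)⟩
      have he₂K : e₂ ∈ K := mem_comp.2 ⟨hZ'C he₂, hr⟩
      have hZ'K : Z' ⊆ K := fun z hz =>
        mem_comp.2 ⟨hZ'C hz, hr.trans (rtg_mono hZ'C (hZ'cyc.2.1 e₂ he₂ z hz))⟩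
      have hrK : Relation.ReflTransGen (Ω.G.AdjIn K) e₁ e₂ :=
        rtg_comp_of_rtg (hZC he₁) hr
      have hdepK : ¬ Ω.FrameIndep K :=
        dep_of_two_cycles hZcyc hZ'cyc hZK hZ'K hne he₁ he₂ hrK
      by_contra hne'
      exact hdepK (hC.2 K (Finset.ssubset_iff_subset_ne.2 ⟨comp_subset, hne'⟩))
  obtain ⟨g, hgC, hKC⟩ := key
  intro e he f hf
  have he' : e ∈ Ω.G.comp C g := by rw [hKC]; exact he
  have hf' : f ∈ Ω.G.comp C g := by rw [hKC]; exact hf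
  exact (rtg_symm (mem_comp.1 he').2).trans (mem_comp.1 hf').2

/-- Dichotomy: a frame circuit is either a balanced cycle, or contains two distinct
cycles and no balanced cycle. -/
lemma frameCircuit_cases {C : Finset E} (hC : Ω.FrameCircuit C) :
    (Ω.G.IsCycle C ∧ C ∈ Ω.Bal) ∨
    ((∃ Z, Z ⊆ C ∧ ∃ Z', Z' ⊆ C ∧ Ω.G.IsCycle Z ∧ Ω.G.IsCycle Z' ∧ Z ≠ Z') ∧
      ∀ Z ⊆ C, Ω.G.IsCycle Z → Z ∉ Ω.Bal) := by
  by_cases hbal : ∃ Z ⊆ C, Ω.G.IsCycle Z ∧ Z ∈ Ω.Bal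
  · left
    obtain ⟨Z, hZC, hZcyc, hZbal⟩ := hbal
    have hdepZ : ¬ Ω.FrameIndep Z := dep_of_bal hZcyc hZbal (Finset.Subset.refl Z)
    have hZC' : Z = C := by
      by_contra hne
      exact hdepZ (hC.2 Z (Finset.ssubset_iff_subset_ne.2 ⟨hZC, hne⟩))
    rw [← hZC']
    exact ⟨hZcyc, hZbal⟩
  · right
    push_neg at hbal
    constructor
    · rcases frameCircuit_dep_cases hC.1 with ⟨Z, hZC, hZcyc, hZbal⟩ |
          ⟨Z, Z', hZC, hZ'C, hZcyc, hZ'cyc, hne, _⟩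
      · exact absurd hZbal (hbal Z hZC hZcyc)
      · exact ⟨Z, hZC, Z', hZ'C, hZcyc, hZ'cyc, hne⟩
    · exact hbal

lemma count_of_frameIndep {A : Finset E} (h : Ω.FrameIndep A) :
    A.card ≤ (Ω.G.vFin A).card := by
  apply count_componentwise
  rintro Z hZ Z' hZ' hc hc' ⟨e₁, he₁, e₂, he₂, hr⟩
  by_contra hne
  exact h.2 Z Z' hZ hZ' hc hc' hne e₁ he₁ e₂ he₂ hr

end LinearBiasedGraph
namespace LinearBiasedGraph

open Multigraph

variable {V E : Type*} [DecidableEq E] {Ω : LinearBiasedGraph V E}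

/-- Elimination, counting case: `C₁` contains two distinct cycles. -/
lemma weak_elim_countB {C₁ C₂ : Finset E} {x : E} (h1 : Ω.FrameCircuit C₁)
    (h2 : Ω.FrameCircuit C₂) (hne : C₁ ≠ C₂) (hx1 : x ∈ C₁) (hx2 : x ∈ C₂)
    (hB : ∃ Z, Z ⊆ C₁ ∧ ∃ Z', Z' ⊆ C₁ ∧ Ω.G.IsCycle Z ∧ Ω.G.IsCycle Z' ∧ Z ≠ Z') :
    ¬ Ω.FrameIndep ((C₁ ∪ C₂).erase x) := by
  intro hS
  obtain ⟨Z, hZ1, Z', hZ'1, hZc, hZ'c, hZne⟩ := hB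
  set S := (C₁ ∪ C₂).erase x with hSdef
  have hxu : x ∈ C₁ ∪ C₂ := Finset.mem_union_left _ hx1
  have hcardS : S.card + 1 = (C₁ ∪ C₂).card := Finset.card_erase_add_one hxu
  have hcardU : (C₁ ∪ C₂).card + (C₁ ∩ C₂).card = C₁.card + C₂.card :=
    Finset.card_union_add_card_inter C₁ C₂
  have hC1count : (Ω.G.vFin C₁).card + 1 ≤ C₁.card :=
    connected_count_two_cycles (frameCircuit_connected h1) hZc hZ'c hZ1 hZ'1 hZne
  have hSv : S.card ≤ (Ω.G.vFin S).card := count_of_frameIndep hS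
  have hSvsub : (Ω.G.vFin S).card ≤ (Ω.G.vFin (C₁ ∪ C₂)).card :=
    Finset.card_le_card (vFin_mono (Finset.erase_subset _ _))
  have hvU : (Ω.G.vFin (C₁ ∪ C₂)).card + (Ω.G.vFin C₁ ∩ Ω.G.vFin C₂).card
      = (Ω.G.vFin C₁).card + (Ω.G.vFin C₂).card := by
    rw [vFin_union]
    exact Finset.card_union_add_card_inter _ _
  have hvIsub : (Ω.G.vFin (C₁ ∩ C₂)).card ≤ (Ω.G.vFin C₁ ∩ Ω.G.vFin C₂).card := by
    apply Finset.card_le_card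
    intro v hv
    exact Finset.mem_inter.2 ⟨vFin_mono Finset.inter_subset_left hv,
      vFin_mono Finset.inter_subset_right hv⟩
  have hIss : C₁ ∩ C₂ ⊂ C₁ := by
    refine Finset.ssubset_iff_subset_ne.2 ⟨Finset.inter_subset_left, ?_⟩
    intro hEq
    have hsub : C₁ ⊆ C₂ := by
      intro y hy
      have : y ∈ C₁ ∩ C₂ := by rw [hEq]; exact hy
      exact (Finset.mem_inter.1 this).2
    exact hne (frameCircuit_subset_eq h1 h2 hsub)
  have hIindep := h1.2 _ hIss
  rcases frameCircuit_cases h2 with ⟨hc2cyc, _⟩ |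
      ⟨⟨W, hW2, W', hW'2, hWc, hW'c, hWne⟩, _⟩
  · -- C₂ is a balanced cycle
    by_cases hQ : ∃ Q ⊆ C₁ ∩ C₂, Ω.G.IsCycle Q
    · obtain ⟨Q, hQsub, hQc⟩ := hQ
      have hQC2 : Q = C₂ :=
        cycle_no_ssubset_cycle hc2cyc hQc (hQsub.trans Finset.inter_subset_right)
      have hC2C1 : C₂ ⊆ C₁ := by
        rw [← hQC2]
        exact hQsub.trans Finset.inter_subset_left
      exact hne (frameCircuit_subset_eq h2 h1 hC2C1).symm
    · have hIne : (C₁ ∩ C₂).Nonempty := ⟨x, Finset.mem_inter.2 ⟨hx1, hx2⟩⟩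
      have hcore : Ω.G.core (C₁ ∩ C₂) = ∅ := by
        by_contra hc
        obtain ⟨y, hy⟩ := Finset.nonempty_of_ne_empty hc
        obtain ⟨Q, hQ1, hQ2⟩ := exists_cycle_of_md2 _ (md2_core (G := Ω.G)) ⟨y, hy⟩
        exact hQ ⟨Q, hQ1.trans core_subset, hQ2⟩
      have hIcount := core_empty_count _ hcore hIne
      have hc2card : (Ω.G.vFin C₂).card = C₂.card := cycle_card hc2cyc
      omega
  · have hC2count : (Ω.G.vFin C₂).card + 1 ≤ C₂.card :=
      connected_count_two_cycles (frameCircuit_connected h2) hWc hW'c hW2 hW'2 hWne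
    have hIcount : (C₁ ∩ C₂).card ≤ (Ω.G.vFin (C₁ ∩ C₂)).card :=
      count_of_frameIndep hIindep
    omega

/-- Elimination, theta case: both circuits are balanced cycles. -/
lemma weak_elim_AA {C₁ C₂ : Finset E} {x : E} (h1 : Ω.FrameCircuit C₁)
    (h2 : Ω.FrameCircuit C₂) (hne : C₁ ≠ C₂) (hx1 : x ∈ C₁) (hx2 : x ∈ C₂)
    (hc1 : Ω.G.IsCycle C₁) (hb1 : C₁ ∈ Ω.Bal)
    (hc2 : Ω.G.IsCycle C₂) (hb2 : C₂ ∈ Ω.Bal) :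
    ¬ Ω.FrameIndep ((C₁ ∪ C₂).erase x) := by
  have hd : ¬ (Ω.G.ends x).IsDiag := by
    intro hd
    obtain ⟨w₀, hw₀⟩ := exists_diag_rep hd
    have h11 : C₁ = {x} := cycle_eq_of_loop_mem hc1 hx1 hw₀
    have hss : C₁ ⊂ C₂ := by
      refine Finset.ssubset_iff_subset_ne.2 ⟨?_, hne⟩
      rw [h11]
      exact Finset.singleton_subset_iff.2 hx2
    exact h1.1 (h2.2 _ hss)
  obtain ⟨⟨u, w⟩, hrep⟩ := Quot.exists_rep (Ω.G.ends x)
  have hxe : Ω.G.ends x = s(u, w) := hrep.symm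
  have hincu : Ω.G.Inc x u := by rw [Multigraph.Inc, hxe]; simp
  set S := (C₁ ∪ C₂).erase x with hSdef
  have hSeq : S = (C₁.erase x) ∪ (C₂.erase x) := by
    ext y
    simp only [hSdef, Finset.mem_erase, Finset.mem_union]
    tauto
  obtain ⟨z₁, hz₁, hz₁u⟩ := exists_edge_at_of_cycle_erase hc1 hx1 hd hincu
  obtain ⟨z₂, hz₂, hz₂u⟩ := exists_edge_at_of_cycle_erase hc2 hx2 hd hincu
  have hconnS : Ω.G.EdgeConnected S := by
    rw [hSeq]
    exact edgeConnected_union (cycle_erase_connected hc1 hx1)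
      (cycle_erase_connected hc2 hx2) hz₁ hz₂ hz₁u hz₂u
  set D := C₁ ∆ C₂ with hDdef
  have hDS : D ⊆ S := by
    intro y hy
    rw [hDdef, Finset.mem_symmDiff] at hy
    rw [hSdef, Finset.mem_erase, Finset.mem_union]
    constructor
    · rintro rfl
      tauto
    · tauto
  have hDne : D.Nonempty := by
    rw [Finset.nonempty_iff_ne_empty]
    intro hDe
    apply hne
    ext y
    constructor
    · intro hy
      by_contra hy2
      have : y ∈ D := by rw [hDdef, Finset.mem_symmDiff]; tauto
      rw [hDe] at this
      exact absurd this (Finset.notMem_empty y)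
    · intro hy
      by_contra hy2
      have : y ∈ D := by rw [hDdef, Finset.mem_symmDiff]; tauto
      rw [hDe] at this
      exact absurd this (Finset.notMem_empty y)
  have hDeven : ∀ w', Even (Ω.G.deg D w') :=
    even_deg_symmDiff (cycle_even_deg hc1) (cycle_even_deg hc2)
  obtain ⟨Z, hZD, hZc⟩ := exists_cycle_of_even hDeven hDne
  by_cases hZDeq : Z = D
  · have hZbal : Z ∈ Ω.Bal := Ω.theta C₁ C₂ Z hc1 hc2 hZc (by rw [hZDeq]) hb1 hb2
    exact dep_of_bal hZc hZbal (hZD.trans hDS)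
  · have hDZss : Z ⊂ D := Finset.ssubset_iff_subset_ne.2 ⟨hZD, hZDeq⟩
    have hDZne : (D \ Z).Nonempty := by
      obtain ⟨y, hy1, hy2⟩ := Finset.exists_of_ssubset hDZss
      exact ⟨y, Finset.mem_sdiff.2 ⟨hy1, hy2⟩⟩
    have hDZeven : ∀ w', Even (Ω.G.deg (D \ Z) w') :=
      even_deg_sdiff hZD hDeven (cycle_even_deg hZc)
    obtain ⟨Z', hZ'sub, hZ'c⟩ := exists_cycle_of_even hDZeven hDZne
    have hZZ'ne : Z ≠ Z' := by
      obtain ⟨y, hy⟩ := hZ'c.1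
      intro hEq
      exact (Finset.mem_sdiff.1 (hZ'sub hy)).2 (by rw [hEq]; exact hy)
    obtain ⟨e₁, he₁⟩ := hZc.1
    obtain ⟨e₂, he₂⟩ := hZ'c.1
    have hZS : Z ⊆ S := hZD.trans hDS
    have hZ'S : Z' ⊆ S := (hZ'sub.trans Finset.sdiff_subset).trans hDS
    exact dep_of_two_cycles hZc hZ'c hZS hZ'S hZZ'ne he₁ he₂
      (hconnS e₁ (hZS he₁) e₂ (hZ'S he₂))

/-- Weak circuit elimination for the frame matroid. -/
theorem weak_elim {C₁ C₂ : Finset E} {x : E} (h1 : Ω.FrameCircuit C₁)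
    (h2 : Ω.FrameCircuit C₂) (hne : C₁ ≠ C₂) (hx1 : x ∈ C₁) (hx2 : x ∈ C₂) :
    ¬ Ω.FrameIndep ((C₁ ∪ C₂).erase x) := by
  rcases frameCircuit_cases h1 with ⟨hc1, hb1⟩ | ⟨hB1, _⟩
  · rcases frameCircuit_cases h2 with ⟨hc2, hb2⟩ | ⟨hB2, _⟩
    · exact weak_elim_AA h1 h2 hne hx1 hx2 hc1 hb1 hc2 hb2
    · have := weak_elim_countB h2 h1 (Ne.symm hne) hx2 hx1 hB2
      rwa [Finset.union_comm] at this
  · exact weak_elim_countB h1 h2 hne hx1 hx2 hB1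

end LinearBiasedGraph
namespace LinearBiasedGraph

open Multigraph

variable {V E : Type*} [DecidableEq E] {Ω : LinearBiasedGraph V E}

/-- Strong circuit elimination. -/
theorem strong_elim : ∀ n : ℕ, ∀ C D : Finset E, (C ∪ D).card ≤ n →
    Ω.FrameCircuit C → Ω.FrameCircuit D → ∀ g e : E, g ∈ C → g ∈ D → e ∈ C → e ∉ D →
    ∃ C' : Finset E, Ω.FrameCircuit C' ∧ e ∈ C' ∧ C' ⊆ (C ∪ D).erase g := by
  intro n
  induction n with
  | zero =>
    intro C D hcard hC hD g e hgC hgD heC heD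
    exfalso
    have h1 : g ∈ C ∪ D := Finset.mem_union_left _ hgC
    have := Finset.card_pos.2 ⟨g, h1⟩
    omega
  | succ n ih =>
    intro C D hcard hC hD g e hgC hgD heC heD
    have hne : C ≠ D := fun h => heD (h ▸ heC)
    have hdep := weak_elim hC hD hne hgC hgD
    obtain ⟨F, hFsub, hF⟩ := exists_frameCircuit _ hdep
    by_cases heF : e ∈ F
    · exact ⟨F, hF, heF, hFsub⟩
    · have hFC : ¬ F ⊆ C := by
        intro hsub
        have h2 := frameCircuit_subset_eq hF hC hsub
        subst h2
        exact (Finset.mem_erase.1 (hFsub hgC)).1 rfl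
      obtain ⟨x, hxF, hxC⟩ := Finset.not_subset.1 hFC
      have hxD : x ∈ D := by
        rcases Finset.mem_union.1 (Finset.mem_of_mem_erase (hFsub hxF)) with h | h
        · exact absurd h hxC
        · exact h
      have hgF : g ∉ F := fun h => (Finset.mem_erase.1 (hFsub h)).1 rfl
      have hcard1 : (D ∪ F).card ≤ n := by
        have hsub : D ∪ F ⊆ C ∪ D := by
          intro y hy
          rcases Finset.mem_union.1 hy with h | h
          · exact Finset.mem_union_right _ h
          · exact Finset.mem_of_mem_erase (hFsub h)
        have hssub : D ∪ F ⊂ C ∪ D := by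
          refine Finset.ssubset_iff_subset_ne.2 ⟨hsub, ?_⟩
          intro hEq
          have h3 : e ∈ D ∪ F := by rw [hEq]; exact Finset.mem_union_left _ heC
          rcases Finset.mem_union.1 h3 with h | h
          · exact heD h
          · exact heF h
        have := Finset.card_lt_card hssub
        omega
      obtain ⟨D', hD', hgD', hD'sub⟩ := ih D F hcard1 hD hF x g hxD hxF hgD hgF
      have heD' : e ∉ D' := by
        intro h
        rcases Finset.mem_union.1 (Finset.mem_of_mem_erase (hD'sub h)) with h' | h'
        · exact heD h'
        · exact heF h'
      have hcard2 : (C ∪ D').card ≤ n := by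
        have hsub : C ∪ D' ⊆ C ∪ D := by
          intro y hy
          rcases Finset.mem_union.1 hy with h | h
          · exact Finset.mem_union_left _ h
          · rcases Finset.mem_union.1 (Finset.mem_of_mem_erase (hD'sub h)) with h3 | h3
            · exact Finset.mem_union_right _ h3
            · exact Finset.mem_of_mem_erase (hFsub h3)
        have hssub : C ∪ D' ⊂ C ∪ D := by
          refine Finset.ssubset_iff_subset_ne.2 ⟨hsub, ?_⟩
          intro hEq
          have hx' : x ∈ C ∪ D' := by rw [hEq]; exact Finset.mem_union_right _ hxD
          rcases Finset.mem_union.1 hx' with h | h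
          · exact hxC h
          · exact (Finset.mem_erase.1 (hD'sub h)).1 rfl
        have := Finset.card_lt_card hssub
        omega
      obtain ⟨C', hC', heC', hC'sub⟩ := ih C D' hcard2 hC hD' g e hgC hgD' heC heD'
      refine ⟨C', hC', heC', ?_⟩
      intro y hy
      have h2 := hC'sub hy
      have hyg : y ≠ g := (Finset.mem_erase.1 h2).1
      rcases Finset.mem_union.1 (Finset.mem_of_mem_erase h2) with h3 | h3
      · exact Finset.mem_erase.2 ⟨hyg, Finset.mem_union_left _ h3⟩
      · rcases Finset.mem_union.1 (Finset.mem_of_mem_erase (hD'sub h3)) with h5 | h5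
        · exact Finset.mem_erase.2 ⟨hyg, Finset.mem_union_right _ h5⟩
        · exact Finset.mem_erase.2 ⟨hyg, Finset.mem_of_mem_erase (hFsub h5)⟩

lemma frameBase_insert_dep {B : Finset E} (hB : Ω.FrameBase B) {y : E} (hy : y ∉ B) :
    ¬ Ω.FrameIndep (insert y B) := by
  intro h
  have h2 := hB.2 _ h (Finset.subset_insert y B)
  exact hy (by rw [← h2]; exact Finset.mem_insert_self y B)

lemma frameBase_of_indep_max {B : Finset E} (hind : Ω.FrameIndep B)
    (h : ∀ y ∉ B, ¬ Ω.FrameIndep (insert y B)) : Ω.FrameBase B := by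
  refine ⟨hind, ?_⟩
  intro A hA hBA
  by_contra hne
  obtain ⟨y, hyA, hyB⟩ := Finset.exists_of_ssubset
    (Finset.ssubset_iff_subset_ne.2 ⟨hBA, fun hh => hne hh.symm⟩)
  exact h y hyB (frameIndep_subset hA (Finset.insert_subset hyA hBA))

lemma mem_of_circuit_insert {B : Finset E} (hB : Ω.FrameIndep B) {y : E} {D : Finset E}
    (hD : Ω.FrameCircuit D) (hsub : D ⊆ insert y B) : y ∈ D := by
  by_contra hno
  apply hD.1
  apply frameIndep_subset hB
  intro z hz
  rcases Finset.mem_insert.1 (hsub hz) with h | h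
  · exact absurd (h ▸ hz) hno
  · exact h

/-- Fundamental circuit: unique circuit contained in `insert y B`. -/
lemma fund_circuit {B : Finset E} (hB : Ω.FrameIndep B) {y : E}
    (hdep : ¬ Ω.FrameIndep (insert y B)) :
    ∃ C, Ω.FrameCircuit C ∧ y ∈ C ∧ C ⊆ insert y B ∧
      ∀ D, Ω.FrameCircuit D → D ⊆ insert y B → D = C := by
  obtain ⟨C, hCsub, hC⟩ := exists_frameCircuit _ hdep
  have hyC : y ∈ C := mem_of_circuit_insert hB hC hCsub
  refine ⟨C, hC, hyC, hCsub, ?_⟩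
  intro D hD hDsub
  by_contra hne2
  have hyD : y ∈ D := mem_of_circuit_insert hB hD hDsub
  have hdepE := weak_elim hD hC hne2 hyD hyC
  have hsub : (D ∪ C).erase y ⊆ B := by
    intro z hz
    obtain ⟨hzy, hzU⟩ := Finset.mem_erase.1 hz
    rcases Finset.mem_union.1 hzU with h | h
    · rcases Finset.mem_insert.1 (hDsub h) with h' | h'
      · exact absurd h' hzy
      · exact h'
    · rcases Finset.mem_insert.1 (hCsub h) with h' | h'
      · exact absurd h' hzy
      · exact h'
  exact (dep_superset hdepE hsub) hB

/-- Transitivity lemma for circuits (used to find a feasible exchange element). -/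
lemma u3_aux {I : Finset E} {x : E} (hxI : x ∉ I) :
    ∀ n : ℕ, ∀ D : Finset E, (D \ insert x I).card ≤ n → Ω.FrameCircuit D → x ∈ D →
    (∀ f ∈ D, f ≠ x → f ∉ I → ∃ Df, Ω.FrameCircuit Df ∧ f ∈ Df ∧ Df ⊆ insert f I) →
    ¬ Ω.FrameIndep (insert x I) := by
  intro n
  induction n with
  | zero =>
    intro D hcard hD hxD _
    have hsub : D ⊆ insert x I := by
      intro z hz
      by_contra hzI
      have h1 : z ∈ D \ insert x I := Finset.mem_sdiff.2 ⟨hz, hzI⟩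
      have := Finset.card_pos.2 ⟨z, h1⟩
      omega
    exact dep_superset hD.1 hsub
  | succ n ih =>
    intro D hcard hD hxD hf
    by_cases hsub : D ⊆ insert x I
    · exact dep_superset hD.1 hsub
    · obtain ⟨g, hgD, hgI⟩ := Finset.not_subset.1 hsub
      have hgx : g ≠ x := fun h => hgI (h ▸ Finset.mem_insert_self x I)
      have hgI' : g ∉ I := fun h => hgI (Finset.mem_insert_of_mem h)
      obtain ⟨Dg, hDg, hgDg, hDgsub⟩ := hf g hgD hgx hgI'
      have hxDg : x ∉ Dg := by
        intro h
        rcases Finset.mem_insert.1 (hDgsub h) with h' | h'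
        · exact hgx h'.symm
        · exact hxI h'
      obtain ⟨D', hD', hxD', hD'sub⟩ :=
        strong_elim (D ∪ Dg).card D Dg (le_refl _) hD hDg g x hgD hgDg hxD hxDg
      have hmeas : (D' \ insert x I).card ≤ n := by
        have hsub2 : D' \ insert x I ⊆ (D \ insert x I).erase g := by
          intro z hz
          obtain ⟨hzD', hzI⟩ := Finset.mem_sdiff.1 hz
          obtain ⟨hzg, hzU⟩ := Finset.mem_erase.1 (hD'sub hzD')
          refine Finset.mem_erase.2 ⟨hzg, ?_⟩
          rcases Finset.mem_union.1 hzU with h3 | h3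
          · exact Finset.mem_sdiff.2 ⟨h3, hzI⟩
          · exfalso
            rcases Finset.mem_insert.1 (hDgsub h3) with h4 | h4
            · exact hzg h4
            · exact hzI (Finset.mem_insert_of_mem h4)
        have h5 : g ∈ D \ insert x I := Finset.mem_sdiff.2 ⟨hgD, hgI⟩
        have := Finset.card_le_card hsub2
        have := Finset.card_erase_of_mem h5
        have := Finset.card_pos.2 ⟨g, h5⟩
        omega
      refine ih D' hmeas hD' hxD' ?_
      intro f hfD' hfx hfI
      obtain ⟨hfg, hfU⟩ := Finset.mem_erase.1 (hD'sub hfD')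
      rcases Finset.mem_union.1 hfU with h3 | h3
      · exact hf f h3 hfx hfI
      · exfalso
        rcases Finset.mem_insert.1 (hDgsub h3) with h4 | h4
        · exact hfg h4
        · exact hfI h4

/-- Symmetric exchange for disjoint bases of the frame matroid. -/
theorem sym_exchange {B₁ B₂ : Finset E} (hB₁ : Ω.FrameBase B₁) (hB₂ : Ω.FrameBase B₂)
    (hdisj : Disjoint B₁ B₂) {e : E} (he : e ∈ B₁) :
    ∃ f ∈ B₂, Ω.FrameBase (insert f (B₁.erase e)) ∧
      Ω.FrameBase (insert e (B₂.erase f)) := by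
  have heB₂ : e ∉ B₂ := fun h => (Finset.disjoint_left.1 hdisj he) h
  have hdep2 : ¬ Ω.FrameIndep (insert e B₂) := frameBase_insert_dep hB₂ heB₂
  obtain ⟨C, hC, heC, hCsub, hCuniq⟩ := fund_circuit hB₂.1 hdep2
  set I := B₁.erase e with hIdef
  have hIindep : Ω.FrameIndep I := frameIndep_subset hB₁.1 (Finset.erase_subset e B₁)
  have hxI : e ∉ I := Finset.notMem_erase e B₁
  have hgood : ∃ f ∈ C, f ≠ e ∧ Ω.FrameIndep (insert f I) := by
    by_contra hbad
    push_neg at hbad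
    have hf : ∀ f ∈ C, f ≠ e → f ∉ I →
        ∃ Df, Ω.FrameCircuit Df ∧ f ∈ Df ∧ Df ⊆ insert f I := by
      intro f hfC hfe hfI
      have hdepf : ¬ Ω.FrameIndep (insert f I) := hbad f hfC hfe
      obtain ⟨Df, hDfsub, hDf⟩ := exists_frameCircuit _ hdepf
      exact ⟨Df, hDf, mem_of_circuit_insert hIindep hDf hDfsub, hDfsub⟩
    have h1 := u3_aux hxI (C \ insert e I).card C (le_refl _) hC heC hf
    rw [Finset.insert_erase he] at h1
    exact h1 hB₁.1
  obtain ⟨f, hfC, hfe, hfIndep⟩ := hgood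
  have hfB₂ : f ∈ B₂ := by
    rcases Finset.mem_insert.1 (hCsub hfC) with h | h
    · exact absurd h hfe
    · exact h
  have hfB₁ : f ∉ B₁ := fun h => (Finset.disjoint_left.1 hdisj h) hfB₂
  refine ⟨f, hfB₂, ?_, ?_⟩
  · -- B₁' := insert f I is a base
    have hdepf : ¬ Ω.FrameIndep (insert f B₁) := frameBase_insert_dep hB₁ hfB₁
    obtain ⟨Cf, hCf, hfCf, hCfsub, hCfuniq⟩ := fund_circuit hB₁.1 hdepf
    have heCf : e ∈ Cf := by
      by_contra hno
      apply hCf.1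
      apply frameIndep_subset hfIndep
      intro z hz
      rcases Finset.mem_insert.1 (hCfsub hz) with h | h
      · exact Finset.mem_insert.2 (Or.inl h)
      · exact Finset.mem_insert_of_mem
          (Finset.mem_erase.2 ⟨fun hze => hno (hze ▸ hz), h⟩)
    apply frameBase_of_indep_max hfIndep
    intro y hyB₁'
    by_cases hye : y = e
    · subst hye
      have hEq : insert y (insert f I) = insert f B₁ := by
        rw [hIdef, Finset.insert_comm, Finset.insert_erase he]
      rw [hEq]
      exact hdepf
    · have hyB₁ : y ∉ B₁ := by
        intro h
        exact hyB₁' (Finset.mem_insert_of_mem (Finset.mem_erase.2 ⟨hye, h⟩))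
      have hdepy : ¬ Ω.FrameIndep (insert y B₁) := frameBase_insert_dep hB₁ hyB₁
      obtain ⟨Dy, hDysub, hDy⟩ := exists_frameCircuit _ hdepy
      have hyDy : y ∈ Dy := mem_of_circuit_insert hB₁.1 hDy hDysub
      by_cases heDy : e ∈ Dy
      · have hneq : Dy ≠ Cf := by
          intro h
          rcases Finset.mem_insert.1 (hCfsub (h ▸ hyDy)) with h' | h'
          · exact hyB₁' (Finset.mem_insert.2 (Or.inl h'))
          · exact hyB₁ h'
        have hdepE := weak_elim hDy hCf hneq heDy heCf
        apply dep_superset hdepE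
        intro z hz
        obtain ⟨hze, hzU⟩ := Finset.mem_erase.1 hz
        rcases Finset.mem_union.1 hzU with h | h
        · rcases Finset.mem_insert.1 (hDysub h) with h' | h'
          · exact Finset.mem_insert.2 (Or.inl h')
          · exact Finset.mem_insert_of_mem (Finset.mem_insert_of_mem
              (Finset.mem_erase.2 ⟨hze, h'⟩))
        · rcases Finset.mem_insert.1 (hCfsub h) with h' | h'
          · exact Finset.mem_insert_of_mem (Finset.mem_insert.2 (Or.inl h'))
          · exact Finset.mem_insert_of_mem (Finset.mem_insert_of_mem
              (Finset.mem_erase.2 ⟨hze, h'⟩))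
      · apply dep_superset hDy.1
        intro z hz
        rcases Finset.mem_insert.1 (hDysub hz) with h' | h'
        · exact Finset.mem_insert.2 (Or.inl h')
        · exact Finset.mem_insert_of_mem (Finset.mem_insert_of_mem
            (Finset.mem_erase.2 ⟨fun hzE => heDy (hzE ▸ hz), h'⟩))
  · -- B₂' := insert e (B₂.erase f) is a base
    have hindep2 : Ω.FrameIndep (insert e (B₂.erase f)) := by
      by_contra hdep'
      obtain ⟨D, hDsub, hD⟩ := exists_frameCircuit _ hdep'
      have hDsub' : D ⊆ insert e B₂ := by
        intro z hz
        rcases Finset.mem_insert.1 (hDsub hz) with h | h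
        · exact Finset.mem_insert.2 (Or.inl h)
        · exact Finset.mem_insert_of_mem (Finset.mem_of_mem_erase h)
      have hDC := hCuniq D hD hDsub'
      have hfD : f ∈ D := by rw [hDC]; exact hfC
      rcases Finset.mem_insert.1 (hDsub hfD) with h | h
      · exact hfe h
      · exact (Finset.mem_erase.1 h).1 rfl
    apply frameBase_of_indep_max hindep2
    intro y hyB₂'
    by_cases hyf : y = f
    · subst hyf
      have hEq : insert y (insert e (B₂.erase y)) = insert e B₂ := by
        rw [Finset.insert_comm, Finset.insert_erase hfB₂]
      rw [hEq]
      exact hdep2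
    · have hyB₂ : y ∉ B₂ := fun h =>
        hyB₂' (Finset.mem_insert_of_mem (Finset.mem_erase.2 ⟨hyf, h⟩))
      have hye : y ≠ e := fun h => hyB₂' (Finset.mem_insert.2 (Or.inl h))
      have hdepy : ¬ Ω.FrameIndep (insert y B₂) := frameBase_insert_dep hB₂ hyB₂
      obtain ⟨Dy, hDysub, hDy⟩ := exists_frameCircuit _ hdepy
      have hyDy : y ∈ Dy := mem_of_circuit_insert hB₂.1 hDy hDysub
      by_cases hfDy : f ∈ Dy
      · have hneq : Dy ≠ C := by
          intro h
          rcases Finset.mem_insert.1 (hCsub (h ▸ hyDy)) with h' | h'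
          · exact hye h'
          · exact hyB₂ h'
        have hdepE := weak_elim hDy hC hneq hfDy hfC
        apply dep_superset hdepE
        intro z hz
        obtain ⟨hzf, hzU⟩ := Finset.mem_erase.1 hz
        rcases Finset.mem_union.1 hzU with h | h
        · rcases Finset.mem_insert.1 (hDysub h) with h' | h'
          · exact Finset.mem_insert.2 (Or.inl h')
          · exact Finset.mem_insert_of_mem (Finset.mem_insert_of_mem
              (Finset.mem_erase.2 ⟨hzf, h'⟩))
        · rcases Finset.mem_insert.1 (hCsub h) with h' | h'
          · exact Finset.mem_insert_of_mem (Finset.mem_insert.2 (Or.inl h'))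
          · exact Finset.mem_insert_of_mem (Finset.mem_insert_of_mem
              (Finset.mem_erase.2 ⟨hzf, h'⟩))
      · apply dep_superset hDy.1
        intro z hz
        rcases Finset.mem_insert.1 (hDysub hz) with h' | h'
        · exact Finset.mem_insert.2 (Or.inl h')
        · exact Finset.mem_insert_of_mem (Finset.mem_insert_of_mem
            (Finset.mem_erase.2 ⟨fun hzf => hfDy (hzf ▸ hz), h'⟩))

end LinearBiasedGraph
section MainProof

open LinearBiasedGraph Multigraph

variable {V E : Type*} [DecidableEq E]

lemma pair_card {a b : E} (h : a ≠ b) : ({a, b} : Finset E).card = 2 := by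
  rw [Finset.card_insert_of_notMem (by simpa using h), Finset.card_singleton]

lemma filter_erase' (p : E → Prop) [DecidablePred p] (s : Finset E) (a : E) :
    (s.erase a).filter p = (s.filter p).erase a := by
  ext x
  simp only [Finset.mem_filter, Finset.mem_erase]
  tauto

end MainProof
open LinearBiasedGraph in
theorem matching_edge_move' {V E : Type*} [DecidableEq E] (Ω : LinearBiasedGraph V E)
    (v : V) (κ : ℕ) (𝓑 : Fin κ → Finset E)
    (hbase : ∀ i, Ω.FrameBase (𝓑 i))
    (hdisj : ∀ i j : Fin κ, i ≠ j → Disjoint (𝓑 i) (𝓑 j))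
    (hred : ∀ j : Fin κ, ((𝓑 j).filter fun e => Ω.G.Inc e v).card ≤ 2)
    (ei ej ek : E) (t s : Fin κ)
    (ht : ((𝓑 t).filter fun e => Ω.G.Inc e v) = {ei, ej}) (hij : ei ≠ ej)
    (hs : ((𝓑 s).filter fun e => Ω.G.Inc e v) = {ek}) :
    ∃ 𝓑' : Fin κ → Finset E, Ω.ExchReachable 𝓑 𝓑' ∧
      (∀ j : Fin κ, ((𝓑' j).filter fun e => Ω.G.Inc e v).card ≤ 2) ∧
      (matchPairs Ω v 𝓑' = (matchPairs Ω v 𝓑 \ {({ei, ej} : Finset E)}) ∪ {({ej, ek} : Finset E)} ∨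
       matchPairs Ω v 𝓑' = (matchPairs Ω v 𝓑 \ {({ei, ej} : Finset E)}) ∪ {({ei, ek} : Finset E)}) := by
  classical
  -- basic membership facts
  have heif : ei ∈ (𝓑 t).filter fun e => Ω.G.Inc e v := by
    rw [ht]; exact Finset.mem_insert_self ei {ej}
  have hejf : ej ∈ (𝓑 t).filter fun e => Ω.G.Inc e v := by
    rw [ht]; exact Finset.mem_insert_of_mem (Finset.mem_singleton_self ej)
  have hekf : ek ∈ (𝓑 s).filter fun e => Ω.G.Inc e v := by
    rw [hs]; exact Finset.mem_singleton_self ek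
  have heit : ei ∈ 𝓑 t := (Finset.mem_filter.1 heif).1
  have hejt : ej ∈ 𝓑 t := (Finset.mem_filter.1 hejf).1
  have heks : ek ∈ 𝓑 s := (Finset.mem_filter.1 hekf).1
  have hincei : Ω.G.Inc ei v := (Finset.mem_filter.1 heif).2
  have hincek : Ω.G.Inc ek v := (Finset.mem_filter.1 hekf).2
  have hts : t ≠ s := by
    intro h
    subst h
    rw [ht] at hs
    have h1 : ({ei, ej} : Finset E).card = 2 := pair_card hij
    rw [hs, Finset.card_singleton] at h1
    omega
  have hdisjts : Disjoint (𝓑 t) (𝓑 s) := hdisj t s hts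
  have heiek : ei ≠ ek := fun h => (Finset.disjoint_left.1 hdisjts heit) (h ▸ heks)
  have hejek : ej ≠ ek := fun h => (Finset.disjoint_left.1 hdisjts hejt) (h ▸ heks)
  -- symmetric exchange
  obtain ⟨f, hfs, hbase1, hbase2⟩ := sym_exchange (hbase t) (hbase s) hdisjts heit
  have hfnt : f ∉ 𝓑 t := fun h => (Finset.disjoint_left.1 hdisjts h) hfs
  -- the new sequence
  set Bt' := insert f ((𝓑 t).erase ei) with hBt'
  set Bs' := insert ei ((𝓑 s).erase f) with hBs'
  set 𝓑' : Fin κ → Finset E := fun r => if r = t then Bt' else if r = s then Bs' else 𝓑 r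
    with h𝓑'
  have h't : 𝓑' t = Bt' := by simp [h𝓑']
  have h's : 𝓑' s = Bs' := by simp [h𝓑', Ne.symm hts]
  have h'r : ∀ r, r ≠ t → r ≠ s → 𝓑' r = 𝓑 r := by
    intro r h1 h2
    simp [h𝓑', h1, h2]
  -- one exchange step
  have hstep : Ω.SymExchStep 𝓑 𝓑' := by
    refine ⟨t, s, hts, ei, heit, f, hfs, ?_, ?_, ?_, ?_, ?_⟩
    · rw [← Finset.erase_eq]; exact hbase1
    · rw [← Finset.erase_eq]; exact hbase2
    · rw [← Finset.erase_eq]; exact h't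
    · rw [← Finset.erase_eq]; exact h's
    · exact h'r
  have hreach : Ω.ExchReachable 𝓑 𝓑' := Relation.ReflTransGen.single hstep
  -- filters of the new bases
  have hft : ((𝓑 t).erase ei).filter (fun e => Ω.G.Inc e v) = {ej} := by
    rw [filter_erase', ht, Finset.erase_insert (by simpa using hij)]
  have hfincase : Ω.G.Inc f v → f = ek := by
    intro h
    have : f ∈ (𝓑 s).filter fun e => Ω.G.Inc e v := Finset.mem_filter.2 ⟨hfs, h⟩
    rw [hs] at this
    exact Finset.mem_singleton.1 this
  by_cases hfv : Ω.G.Inc f v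
  · -- Case A : f = ek, matching edge becomes {ej, ek}
    have hfek : f = ek := hfincase hfv
    subst hfek
    have hfiltt : (Bt'.filter fun e => Ω.G.Inc e v) = {ej, f} := by
      rw [hBt', Finset.filter_insert, if_pos hfv, hft]
      rw [Finset.pair_comm]
    have hfilts : (Bs'.filter fun e => Ω.G.Inc e v) = {ei} := by
      rw [hBs', Finset.filter_insert, if_pos hincei, filter_erase', hs,
        Finset.erase_singleton]
      rfl
    refine ⟨𝓑', hreach, ?_, Or.inl ?_⟩
    · intro j
      by_cases hjt : j = t
      · subst hjt; rw [h't, hfiltt]; exact (pair_card hejek).le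
      · by_cases hjs : j = s
        · subst hjs; rw [h's, hfilts, Finset.card_singleton]; omega
        · rw [h'r j hjt hjs]; exact hred j
    · ext p
      simp only [matchPairs, Set.mem_setOf_eq, Set.mem_union, Set.mem_diff,
        Set.mem_singleton_iff]
      constructor
      · rintro ⟨r, hr, hcard⟩
        by_cases hrt : r = t
        · subst hrt
          right
          rw [← hr, h't, hfiltt]
        · by_cases hrs : r = s
          · exfalso
            subst hrs
            rw [h's, hfilts] at hr
            rw [← hr, Finset.card_singleton] at hcard
            omega
          · left
            rw [h'r r hrt hrs] at hr
            refine ⟨⟨r, hr, hcard⟩, ?_⟩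
            intro hp
            have : ei ∈ (𝓑 r).filter fun e => Ω.G.Inc e v := by
              rw [hr, hp]; exact Finset.mem_insert_self ei {ej}
            exact (Finset.disjoint_left.1 (hdisj r t hrt) (Finset.mem_filter.1 this).1) heit
      · rintro (⟨⟨r, hr, hcard⟩, hne0⟩ | hp)
        · have hrt : r ≠ t := by
            intro h
            subst h
            rw [hr] at ht
            exact hne0 ht
          have hrs : r ≠ s := by
            intro h
            subst h
            rw [hs] at hr
            rw [← hr, Finset.card_singleton] at hcard
            omega
          exact ⟨r, by rw [h'r r hrt hrs]; exact hr, hcard⟩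
        · exact ⟨t, by rw [h't, hfiltt, hp], by rw [hp]; exact pair_card hejek⟩
  · -- Case B : f is not a v-edge, matching edge becomes {ei, ek}
    have hfek : f ≠ ek := fun h => hfv (h ▸ hincek)
    have hfiltt : (Bt'.filter fun e => Ω.G.Inc e v) = {ej} := by
      rw [hBt', Finset.filter_insert, if_neg hfv, hft]
    have hfilts : (Bs'.filter fun e => Ω.G.Inc e v) = {ei, ek} := by
      rw [hBs', Finset.filter_insert, if_pos hincei, filter_erase', hs,
        Finset.erase_eq_of_notMem (by simpa using hfek)]
    refine ⟨𝓑', hreach, ?_, Or.inr ?_⟩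
    · intro j
      by_cases hjt : j = t
      · subst hjt; rw [h't, hfiltt, Finset.card_singleton]; omega
      · by_cases hjs : j = s
        · subst hjs; rw [h's, hfilts]; exact (pair_card heiek).le
        · rw [h'r j hjt hjs]; exact hred j
    · ext p
      simp only [matchPairs, Set.mem_setOf_eq, Set.mem_union, Set.mem_diff,
        Set.mem_singleton_iff]
      constructor
      · rintro ⟨r, hr, hcard⟩
        by_cases hrt : r = t
        · exfalso
          subst hrt
          rw [h't, hfiltt] at hr
          rw [← hr, Finset.card_singleton] at hcard
          omega
        · by_cases hrs : r = s
          · subst hrs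
            right
            rw [← hr, h's, hfilts]
          · left
            rw [h'r r hrt hrs] at hr
            refine ⟨⟨r, hr, hcard⟩, ?_⟩
            intro hp
            have : ei ∈ (𝓑 r).filter fun e => Ω.G.Inc e v := by
              rw [hr, hp]; exact Finset.mem_insert_self ei {ej}
            exact (Finset.disjoint_left.1 (hdisj r t hrt) (Finset.mem_filter.1 this).1) heit
      · rintro (⟨⟨r, hr, hcard⟩, hne0⟩ | hp)
        · have hrt : r ≠ t := by
            intro h
            subst h
            rw [hr] at ht
            exact hne0 ht
          have hrs : r ≠ s := by
            intro h
            subst h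
            rw [hs] at hr
            rw [← hr, Finset.card_singleton] at hcard
            omega
          exact ⟨r, by rw [h'r r hrt hrs]; exact hr, hcard⟩
        · exact ⟨s, by rw [h's, hfilts, hp], by rw [hp]; exact pair_card heiek⟩
/-- Let `𝓑` be a `v`-reduced sequence of pairwise disjoint bases of a linear frame
matroid, `ei, ej` a pair of `v`-edges forming an edge of the matching graph `𝔐_𝓑`, and
`ek` a `v`-edge which is an isolated vertex of `𝔐_𝓑` (its base contains exactly one
edge at `v`).  Then there is a `v`-reduced sequence `𝓑' ∼ 𝓑` whose matching graph is
obtained from `𝔐_𝓑` by replacing the edge `xᵢxⱼ` with `xⱼx_k` or with `xᵢx_k`. -/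
theorem matching_edge_move {V E : Type*} [DecidableEq E] (Ω : LinearBiasedGraph V E)
    (v : V) (κ : ℕ) (𝓑 : Fin κ → Finset E)
    (hbase : ∀ i, Ω.FrameBase (𝓑 i))
    (hdisj : ∀ i j : Fin κ, i ≠ j → Disjoint (𝓑 i) (𝓑 j))
    (hred : ∀ j : Fin κ, ((𝓑 j).filter fun e => Ω.G.Inc e v).card ≤ 2)
    (ei ej ek : E) (t s : Fin κ)
    (ht : ((𝓑 t).filter fun e => Ω.G.Inc e v) = {ei, ej}) (hij : ei ≠ ej)
    (hs : ((𝓑 s).filter fun e => Ω.G.Inc e v) = {ek}) :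
    ∃ 𝓑' : Fin κ → Finset E, Ω.ExchReachable 𝓑 𝓑' ∧
      (∀ j : Fin κ, ((𝓑' j).filter fun e => Ω.G.Inc e v).card ≤ 2) ∧
      (matchPairs Ω v 𝓑' = (matchPairs Ω v 𝓑 \ {({ei, ej} : Finset E)}) ∪ {({ej, ek} : Finset E)} ∨
       matchPairs Ω v 𝓑' = (matchPairs Ω v 𝓑 \ {({ei, ej} : Finset E)}) ∪ {({ei, ek} : Finset E)}) := by
  exact matching_edge_move' Ω v κ 𝓑 hbase hdisj hred ei ej ek t s ht hij hs
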